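/- arXiv:1404.5985 — 2 statements merged into one kernel-verified Lean document; each statement's English description precedes it below -/
import Mathlib

section
/- For every odd n ∈ ℤ⁺, there exists an RTAM system 𝒯 = (T, σ, 1) at temperature 1 with |T| = n and |dom σ| = 1 such that 𝒯 strictly self-assembles an n × n square. -/
/-! # Reflexive Tile Assembly Model (RTAM) -/

/-- A glue: `none` is the null glue; `some (l, s)` has label `l : ℤ` and strength `s : ℕ`.
The complement of the label `l` is `-l`. -/
abbrev Glue : Type := Option (ℤ × ℕ)

/-- Strength with which two abutting glues bind: `s` if the labels are complementary and
the strengths are both equal to `s`, and `0` otherwise. -/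
def glueBind : Glue → Glue → ℕ
  | some (l₁, s₁), some (l₂, s₂) => if l₂ = -l₁ ∧ s₂ = s₁ then s₁ else 0
  | _, _ => 0

/-- Two abutting glues match (for mismatch-freeness): both null, or complementary labels
with equal strengths. -/
def GlueMatch (g h : Glue) : Prop :=
  (g = none ∧ h = none) ∨ ∃ l s, g = some (l, s) ∧ h = some (-l, s)

/-- A tile type: glues on the north, east, south and west sides (in that order). -/
abbrev TileType : Type := Glue × Glue × Glue × Glue

def TileType.north (t : TileType) : Glue := t.1
def TileType.east (t : TileType) : Glue := t.2.1
def TileType.south (t : TileType) : Glue := t.2.2.1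
def TileType.west (t : TileType) : Glue := t.2.2.2

/-- A reflection `(h, v)`: `h` indicates a flip across the vertical axis (swapping east and
west and negating `x`), `v` a flip across the horizontal axis (swapping north and south and
negating `y`).  `D = (false, false)`, `H = (true, false)`, `V = (false, true)`,
`B = (true, true)`. -/
abbrev Reflection : Type := Bool × Bool

/-- Composition of reflections (the Klein four-group). -/
def Reflection.comp (r s : Reflection) : Reflection := (xor r.1 s.1, xor r.2 s.2)

/-- The action of a reflection on a point of `ℤ²`. -/
def Reflection.onPoint (r : Reflection) (p : ℤ × ℤ) : ℤ × ℤ :=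
  (if r.1 then -p.1 else p.1, if r.2 then -p.2 else p.2)

/-- The tile type obtained by reflecting `t` according to `r` (glues are unchanged, sides
are permuted). -/
def TileType.reflect (t : TileType) (r : Reflection) : TileType :=
  (if r.2 then TileType.south t else TileType.north t,
   if r.1 then TileType.west t else TileType.east t,
   if r.2 then TileType.north t else TileType.south t,
   if r.1 then TileType.east t else TileType.west t)

/-- A placed tile: a tile type together with its reflection. -/
abbrev Placement : Type := TileType × Reflection

/-- An assembly: a partial function from `ℤ²` to placed tiles. -/
abbrev Assembly : Type := ℤ × ℤ → Option Placement

/-- The domain of an assembly. -/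
def adom (α : Assembly) : Set (ℤ × ℤ) := {p | α p ≠ none}

/-- The glue presented by the placed tile `pl` at position `p` on the side facing
position `q` (the null glue if `q` is not adjacent to `p`). -/
def facingGlue (pl : Placement) (p q : ℤ × ℤ) : Glue :=
  if q = (p.1 + 1, p.2) then TileType.east (TileType.reflect pl.1 pl.2)
  else if q = (p.1 - 1, p.2) then TileType.west (TileType.reflect pl.1 pl.2)
  else if q = (p.1, p.2 + 1) then TileType.north (TileType.reflect pl.1 pl.2)
  else if q = (p.1, p.2 - 1) then TileType.south (TileType.reflect pl.1 pl.2)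
  else none

/-- The strength of the bond between the tiles of `α` at positions `p` and `q`. -/
def bondStrength (α : Assembly) (p q : ℤ × ℤ) : ℕ :=
  match α p, α q with
  | some a, some b => glueBind (facingGlue a p q) (facingGlue b q p)
  | _, _ => 0

/-- Adjacency in the binding graph of `α`. -/
def BondAdj (α : Assembly) (p q : ℤ × ℤ) : Prop := 0 < bondStrength α p q

/-- `α` is `τ`-stable: every cut of its binding graph has total strength at least `τ`
(i.e. some finite set of crossing edges already has total strength at least `τ`). -/
def Stable (α : Assembly) (τ : ℕ) : Prop :=
  ∀ A : Set (ℤ × ℤ), A ⊆ adom α → A.Nonempty → (adom α \ A).Nonempty →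
    ∃ E : Finset ((ℤ × ℤ) × (ℤ × ℤ)),
      (∀ e ∈ E, e.1 ∈ A ∧ e.2 ∈ adom α \ A) ∧
      τ ≤ ∑ e ∈ E, bondStrength α e.1 e.2

/-- An RTAM tile assembly system: a finite tile set, a finite stable seed assembly, and a
temperature. -/
structure RTAS where
  tiles : Finset TileType
  seed : Assembly
  temp : ℕ
  seed_nonempty : (adom seed).Nonempty
  seed_finite : (adom seed).Finite
  seed_tiles : ∀ p pl, seed p = some pl → pl.1 ∈ tiles
  seed_stable : Stable seed temp

/-- `β` is obtained from `α` by `τ`-stably attaching a single tile (in any reflection) at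
an empty position. -/
def Attaches (S : RTAS) (α β : Assembly) : Prop :=
  ∃ (p : ℤ × ℤ) (t : TileType) (r : Reflection),
    α p = none ∧ t ∈ S.tiles ∧ β = Function.update α p (some (t, r)) ∧ Stable β S.temp

/-- Producible assemblies: those reachable from the seed in finitely many attachment steps
or in the limit. -/
def Producible (S : RTAS) (α : Assembly) : Prop :=
  ∃ f : ℕ → Assembly, f 0 = S.seed ∧
    (∀ n, f (n + 1) = f n ∨ Attaches S (f n) (f (n + 1))) ∧
    (∀ p pl, α p = some pl ↔ ∃ n, f n p = some pl)

/-- Terminal assemblies: producible assemblies admitting no further attachment. -/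
def Terminal (S : RTAS) (α : Assembly) : Prop :=
  Producible S α ∧ ∀ β, ¬ Attaches S α β

/-- Apply the reflection `r` and then the translation `v` to the assembly `α`. -/
def transform (α : Assembly) (r : Reflection) (v : ℤ × ℤ) : Assembly :=
  fun p => (α (Reflection.onPoint r (p - v))).map fun pl => (pl.1, Reflection.comp r pl.2)

/-- The configuration of an assembly: forget the reflections of the placed tiles. -/
def config (α : Assembly) : ℤ × ℤ → Option TileType := fun p => (α p).map Prod.fst

/-- A system is directed if any two producible assemblies have the same configuration up
to a reflection and a translation. -/
def RTASDirected (S : RTAS) : Prop :=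
  ∀ α β, Producible S α → Producible S β →
    ∃ (r : Reflection) (v : ℤ × ℤ), config (transform β r v) = config α

/-- A system is singly seeded if its seed consists of a single tile. -/
def SinglySeeded (S : RTAS) : Prop := ∃ p, adom S.seed = {p}

/-- `X` weakly self-assembles in `S`. -/
def WeaklySelfAssembles (S : RTAS) (X : Set (ℤ × ℤ)) : Prop :=
  ∃ B ⊆ S.tiles, ∀ α, Terminal S α →
    ∃ (r : Reflection) (v : ℤ × ℤ),
      {p | ∃ pl, transform α r v p = some pl ∧ pl.1 ∈ B} = X

/-- `X` strictly self-assembles in `S`. -/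
def StrictlySelfAssembles (S : RTAS) (X : Set (ℤ × ℤ)) : Prop :=
  ∀ α, Terminal S α →
    ∃ (r : Reflection) (v : ℤ × ℤ), adom (transform α r v) = X

/-- A semi-doubly periodic subset of `ℤ²`. -/
def SemiDoublyPeriodic (X : Set (ℤ × ℤ)) : Prop :=
  ∃ b u v : ℤ × ℤ, X = {p | ∃ n m : ℕ, p = b + (n : ℤ) • u + (m : ℤ) • v}

/-- A finite union of semi-doubly periodic sets. -/
def FiniteUnionSDP (X : Set (ℤ × ℤ)) : Prop :=
  ∃ (k : ℕ) (f : Fin k → Set (ℤ × ℤ)),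
    (∀ i, SemiDoublyPeriodic (f i)) ∧ X = ⋃ i, f i

/-- The box of radius `c` centered at `v`. -/
def box (c : ℕ) (v : ℤ × ℤ) : Set (ℤ × ℤ) :=
  {p | |p.1 - v.1| ≤ (c : ℤ) ∧ |p.2 - v.2| ≤ (c : ℤ)}

/-- The `n × m` rectangle `{0, …, n−1} × {0, …, m−1} ⊆ ℤ²`. -/
def rectShape (n m : ℕ) : Set (ℤ × ℤ) :=
  {p | 0 ≤ p.1 ∧ p.1 < (n : ℤ) ∧ 0 ≤ p.2 ∧ p.2 < (m : ℤ)}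

/-- The `n × n` square `{0, …, n−1}² ⊆ ℤ²`. -/
def squareShape (n : ℕ) : Set (ℤ × ℤ) := rectShape n n

/-- Grid adjacency on `ℤ²`. -/
def GridAdj (p q : ℤ × ℤ) : Prop := (p.1 - q.1).natAbs + (p.2 - q.2).natAbs = 1

/-- `X` is connected in the grid graph. -/
def GridConnectedOn (X : Set (ℤ × ℤ)) : Prop :=
  ∀ p ∈ X, ∀ q ∈ X, Relation.ReflTransGen (fun a b => GridAdj a b ∧ a ∈ X ∧ b ∈ X) p q

/-- A shape: a finite nonempty connected subset of `ℤ²`. -/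
def IsShape (X : Set (ℤ × ℤ)) : Prop := X.Finite ∧ X.Nonempty ∧ GridConnectedOn X

/-- A system is mismatch-free: in every producible assembly, abutting sides of adjacent
tiles are either both null or carry complementary glues of equal strength. -/
def MismatchFree (S : RTAS) : Prop :=
  ∀ α, Producible S α → ∀ p q a b, GridAdj p q → α p = some a → α q = some b →
    GlueMatch (facingGlue a p q) (facingGlue b q p)

/-- `X` is odd-symmetric with respect to some horizontal or vertical line through lattice
points. -/
def OddSymmetric (X : Set (ℤ × ℤ)) : Prop :=
  (∃ l : ℤ, ∀ a b : ℤ, ((a, l - b) ∈ X ↔ (a, l + b) ∈ X)) ∨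
  (∃ l : ℤ, ∀ a b : ℤ, ((l - a, b) ∈ X ↔ (l + a, b) ∈ X))

/-- The binding graph of `α` is a tree: connected on `adom α` and every edge is a bridge. -/
def BindingGraphIsTree (α : Assembly) : Prop :=
  (∀ p ∈ adom α, ∀ q ∈ adom α, Relation.ReflTransGen (BondAdj α) p q) ∧
  (∀ p q, BondAdj α p q →
    ¬ Relation.ReflTransGen
      (fun a b => BondAdj α a b ∧ ¬((a = p ∧ b = q) ∨ (a = q ∧ b = p))) p q)

/-- A spanning tree of the grid graph of a shape `X`. -/
structure TreeOf (X : Set (ℤ × ℤ)) where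
  adj : ℤ × ℤ → ℤ × ℤ → Prop
  symm : ∀ p q, adj p q → adj q p
  valid : ∀ p q, adj p q → p ∈ X ∧ q ∈ X ∧ GridAdj p q
  connected : ∀ p ∈ X, ∀ q ∈ X, Relation.ReflTransGen adj p q
  acyclic : ∀ p q, adj p q →
    ¬ Relation.ReflTransGen
      (fun a b => adj a b ∧ ¬((a = p ∧ b = q) ∨ (a = q ∧ b = p))) p q

/-- The vertex set of a horizontal axis at height `l` from `x₁` to `x₂`. -/
def hAxisSet (l x₁ x₂ : ℤ) : Set (ℤ × ℤ) := {p | p.2 = l ∧ x₁ ≤ p.1 ∧ p.1 ≤ x₂}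

/-- The vertex set of a vertical axis at abscissa `l` from `y₁` to `y₂`. -/
def vAxisSet (l y₁ y₂ : ℤ) : Set (ℤ × ℤ) := {p | p.1 = l ∧ y₁ ≤ p.2 ∧ p.2 ≤ y₂}

/-- A (maximal) horizontal axis of the tree `t`: consecutive vertices on the line `y = l`
joined by tree edges, not extendable on either end. -/
def IsHAxis {X : Set (ℤ × ℤ)} (t : TreeOf X) (l x₁ x₂ : ℤ) : Prop :=
  x₁ ≤ x₂ ∧ (∀ x, x₁ ≤ x → x ≤ x₂ → ((x, l) : ℤ × ℤ) ∈ X) ∧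
  (∀ x, x₁ ≤ x → x < x₂ → t.adj (x, l) (x + 1, l)) ∧
  ¬ t.adj (x₁ - 1, l) (x₁, l) ∧ ¬ t.adj (x₂, l) (x₂ + 1, l)

/-- A (maximal) vertical axis of the tree `t`. -/
def IsVAxis {X : Set (ℤ × ℤ)} (t : TreeOf X) (l y₁ y₂ : ℤ) : Prop :=
  y₁ ≤ y₂ ∧ (∀ y, y₁ ≤ y → y ≤ y₂ → ((l, y) : ℤ × ℤ) ∈ X) ∧
  (∀ y, y₁ ≤ y → y < y₂ → t.adj (l, y) (l, y + 1)) ∧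
  ¬ t.adj (l, y₁ - 1) (l, y₁) ∧ ¬ t.adj (l, y₂) (l, y₂ + 1)

/-- The union of the axial branches of `t` beginning from `v` relative to the axis `a`
(together with `v` itself): everything reachable from `v` through a neighbor not on `a`
without revisiting `v`. -/
def branch {X : Set (ℤ × ℤ)} (t : TreeOf X) (a : Set (ℤ × ℤ)) (v : ℤ × ℤ) :
    Set (ℤ × ℤ) :=
  {v} ∪ {p | ∃ w, t.adj v w ∧ w ∉ a ∧
    Relation.ReflTransGen (fun x y => t.adj x y ∧ x ≠ v ∧ y ≠ v) w p}

/-- The axial branches of `t` beginning from `v` are symmetric across the reflection `ρ`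
(of `ℤ²` across the line of the axis `a`). -/
def BranchSymmetric {X : Set (ℤ × ℤ)} (t : TreeOf X) (a : Set (ℤ × ℤ))
    (ρ : ℤ × ℤ → ℤ × ℤ) (v : ℤ × ℤ) : Prop :=
  (∀ p ∈ branch t a v, ρ p ∈ branch t a v) ∧
  (∀ p q, p ∈ branch t a v → q ∈ branch t a v → t.adj p q → t.adj (ρ p) (ρ q))

/-- `t` is off-by-one symmetric across the horizontal axis determined by `(l, x₁, x₂)`:
the branches from every vertex of the axis, except at most one, are symmetric across it. -/
def OffByOneH {X : Set (ℤ × ℤ)} (t : TreeOf X) (l x₁ x₂ : ℤ) : Prop :=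
  ∃ v₀ : ℤ × ℤ, ∀ x, x₁ ≤ x → x ≤ x₂ → ((x, l) : ℤ × ℤ) ≠ v₀ →
    BranchSymmetric t (hAxisSet l x₁ x₂) (fun p => (p.1, 2 * l - p.2)) (x, l)

/-- `t` is off-by-one symmetric across the vertical axis determined by `(l, y₁, y₂)`. -/
def OffByOneV {X : Set (ℤ × ℤ)} (t : TreeOf X) (l y₁ y₂ : ℤ) : Prop :=
  ∃ v₀ : ℤ × ℤ, ∀ y, y₁ ≤ y → y ≤ y₂ → ((l, y) : ℤ × ℤ) ≠ v₀ →
    BranchSymmetric t (vAxisSet l y₁ y₂) (fun p => (2 * l - p.1, p.2)) (l, y)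

/-- A tree is ε-symmetric if it is off-by-one symmetric across each of its axes. -/
def TreeOf.EpsSymmetric {X : Set (ℤ × ℤ)} (t : TreeOf X) : Prop :=
  (∀ l x₁ x₂, IsHAxis t l x₁ x₂ → OffByOneH t l x₁ x₂) ∧
  (∀ l y₁ y₂, IsVAxis t l y₁ y₂ → OffByOneV t l y₁ y₂)

/-- A shape is ε-symmetric if some spanning tree of its grid graph is ε-symmetric. -/
def EpsSymmetricShape (X : Set (ℤ × ℤ)) : Prop :=
  ∃ t : TreeOf X, TreeOf.EpsSymmetric t

/-- The `c`-scaling of a shape: replace each point by a `c × c` block. -/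
def scaleShape (X : Set (ℤ × ℤ)) (c : ℕ) : Set (ℤ × ℤ) :=
  {p | (Int.fdiv p.1 (c : ℤ), Int.fdiv p.2 (c : ℤ)) ∈ X}

/-- The assembly encoded by a finite list of placed tiles. -/
def listAssembly (L : List ((ℤ × ℤ) × Placement)) : Assembly :=
  fun p => (L.find? fun e => decide (e.1 = p)).map Prod.snd

/-! ### Auxiliary development for Statement 5 -/

namespace RTAMSq

set_option synthInstance.maxSize 1000 in
instance : DecidableEq TileType := fun a b => inferInstanceAs (Decidable (a = b))

def gl (l : ℤ) : Glue := some (l, 1)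

def step (x : ℤ) : ℤ := if 0 ≤ x then x + 1 else x

def vstep (k : ℕ) (y : ℤ) : ℤ := if 0 ≤ y then (k : ℤ) + y + 1 else y - k

/-- Row tile intended at `(j, 0)` (unreflected), `0 ≤ j ≤ k`. -/
def Trow (k : ℕ) (j : ℤ) : TileType :=
  (if k = 0 then none else gl (k+1),
   if j = (k : ℤ) then none else gl (step j),
   if k = 0 then none else gl (k+1),
   if j = 0 ∧ k = 0 then none else gl (-(step (j-1))))

/-- Column tile intended at `(x, j)` (unreflected), `1 ≤ j ≤ k`. -/
def Tcol (k : ℕ) (j : ℤ) : TileType :=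
  (if j = (k : ℤ) then none else gl ((k : ℤ) + j + 1), none, gl (-((k : ℤ) + j)), none)

/-- The glue presented at position `p` toward `q` in the intended assembly. -/
def pres (k : ℕ) (p q : ℤ × ℤ) : Glue :=
  if q = (p.1 + 1, p.2) then (if p.2 = 0 ∧ p.1 ≠ (k : ℤ) then gl (step p.1) else none)
  else if q = (p.1 - 1, p.2) then
    (if p.2 = 0 ∧ p.1 ≠ -(k : ℤ) then gl (-(step (p.1 - 1))) else none)
  else if q = (p.1, p.2 + 1) then (if p.2 = (k : ℤ) then none else gl (vstep k p.2))
  else if q = (p.1, p.2 - 1) then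
    (if p.2 = -(k : ℤ) then none else gl (-(vstep k (p.2 - 1))))
  else none

def InSq (k : ℕ) (p : ℤ × ℤ) : Prop :=
  -(k : ℤ) ≤ p.1 ∧ p.1 ≤ (k : ℤ) ∧ -(k : ℤ) ≤ p.2 ∧ p.2 ≤ (k : ℤ)

def par (p : ℤ × ℤ) : ℤ × ℤ :=
  if p.2 = 0 then (p.1 - p.1.sign, 0) else (p.1, p.2 - p.2.sign)

def PlOK (k : ℕ) (p : ℤ × ℤ) (pl : Placement) : Prop :=
  ∀ q, facingGlue pl p q = pres k p q

def Inv (k : ℕ) (α : Assembly) : Prop :=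
  α (0, 0) = some (Trow k 0, (false, false)) ∧
  ∀ p pl, α p = some pl → InSq k p ∧ PlOK k p pl ∧ (p ≠ (0, 0) → α (par p) ≠ none)

def tilesF (k : ℕ) : Finset TileType :=
  ((Finset.range (k+1)).image fun j : ℕ => Trow k (j : ℤ)) ∪
  ((Finset.range k).image fun j : ℕ => Tcol k ((j : ℤ) + 1))

def seedA (k : ℕ) : Assembly :=
  fun p => if p = (0, 0) then some (Trow k 0, (false, false)) else none

lemma gl_inj {a b : ℤ} (h : gl a = gl b) : a = b := by
  simpa [gl] using h

lemma glueBind_gl (a b : ℤ) : glueBind (gl a) (gl b) = if b = -a then 1 else 0 := by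
  simp [glueBind, gl]

lemma glueBind_pos {g h : Glue} (hp : 0 < glueBind g h) :
    ∃ l s, g = some (l, s) ∧ h = some (-l, s) ∧ 0 < s := by
  match g, h with
  | some (l₁, s₁), some (l₂, s₂) =>
    simp only [glueBind] at hp
    split_ifs at hp with hc
    · exact ⟨l₁, s₁, rfl, by rw [hc.1, hc.2], hp⟩
    · omega
  | some _, none => simp [glueBind] at hp
  | none, _ => simp [glueBind] at hp

lemma mem_tilesF {k : ℕ} {t : TileType} :
    t ∈ tilesF k ↔ (∃ j : ℤ, 0 ≤ j ∧ j ≤ (k : ℤ) ∧ t = Trow k j) ∨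
      (∃ j : ℤ, 1 ≤ j ∧ j ≤ (k : ℤ) ∧ t = Tcol k j) := by
  simp only [tilesF, Finset.mem_union, Finset.mem_image, Finset.mem_range]
  constructor
  · rintro (⟨j, hj, rfl⟩ | ⟨j, hj, rfl⟩)
    · exact Or.inl ⟨j, by positivity, by exact_mod_cast Nat.lt_succ_iff.mp hj, rfl⟩
    · exact Or.inr ⟨(j : ℤ) + 1, by omega, by omega, rfl⟩
  · rintro (⟨j, hj0, hjk, rfl⟩ | ⟨j, hj1, hjk, rfl⟩)
    · exact Or.inl ⟨j.toNat, by omega, by rw [Int.toNat_of_nonneg hj0]⟩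
    · exact Or.inr ⟨(j - 1).toNat, by omega, by rw [Int.toNat_of_nonneg (by omega)]; ring_nf⟩

end RTAMSq
namespace RTAMSq

lemma facingGlue_east (pl : Placement) (a b : ℤ) :
    facingGlue pl (a, b) (a + 1, b) = TileType.east (TileType.reflect pl.1 pl.2) := by
  simp [facingGlue]

lemma facingGlue_west (pl : Placement) (a b : ℤ) :
    facingGlue pl (a, b) (a - 1, b) = TileType.west (TileType.reflect pl.1 pl.2) := by
  simp [facingGlue, Prod.ext_iff, show a - 1 ≠ a + 1 by omega]

lemma facingGlue_north (pl : Placement) (a b : ℤ) :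
    facingGlue pl (a, b) (a, b + 1) = TileType.north (TileType.reflect pl.1 pl.2) := by
  simp [facingGlue, Prod.ext_iff, show b + 1 ≠ b by omega]

lemma facingGlue_south (pl : Placement) (a b : ℤ) :
    facingGlue pl (a, b) (a, b - 1) = TileType.south (TileType.reflect pl.1 pl.2) := by
  simp [facingGlue, Prod.ext_iff, show b - 1 ≠ b by omega, show b - 1 ≠ b + 1 by omega]

lemma facingGlue_far (pl : Placement) (p q : ℤ × ℤ) (h1 : q ≠ (p.1 + 1, p.2))
    (h2 : q ≠ (p.1 - 1, p.2)) (h3 : q ≠ (p.1, p.2 + 1)) (h4 : q ≠ (p.1, p.2 - 1)) :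
    facingGlue pl p q = none := by
  simp [facingGlue, h1, h2, h3, h4]

lemma pres_east (k : ℕ) (a b : ℤ) :
    pres k (a, b) (a + 1, b) = if b = 0 ∧ a ≠ (k : ℤ) then gl (step a) else none := by
  simp [pres]

lemma pres_west (k : ℕ) (a b : ℤ) :
    pres k (a, b) (a - 1, b) =
      if b = 0 ∧ a ≠ -(k : ℤ) then gl (-(step (a - 1))) else none := by
  simp [pres, Prod.ext_iff, show a - 1 ≠ a + 1 by omega]

lemma pres_north (k : ℕ) (a b : ℤ) :
    pres k (a, b) (a, b + 1) = if b = (k : ℤ) then none else gl (vstep k b) := by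
  simp [pres, Prod.ext_iff, show b + 1 ≠ b by omega]

lemma pres_south (k : ℕ) (a b : ℤ) :
    pres k (a, b) (a, b - 1) = if b = -(k : ℤ) then none else gl (-(vstep k (b - 1))) := by
  simp [pres, Prod.ext_iff, show b - 1 ≠ b by omega, show b - 1 ≠ b + 1 by omega]

lemma pres_far (k : ℕ) (p q : ℤ × ℤ) (h1 : q ≠ (p.1 + 1, p.2))
    (h2 : q ≠ (p.1 - 1, p.2)) (h3 : q ≠ (p.1, p.2 + 1)) (h4 : q ≠ (p.1, p.2 - 1)) :
    pres k p q = none := by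
  simp [pres, h1, h2, h3, h4]

lemma plok_cases (k : ℕ) (x y : ℤ) (pl : Placement)
    (he : TileType.east (TileType.reflect pl.1 pl.2) = pres k (x, y) (x + 1, y))
    (hw : TileType.west (TileType.reflect pl.1 pl.2) = pres k (x, y) (x - 1, y))
    (hn : TileType.north (TileType.reflect pl.1 pl.2) = pres k (x, y) (x, y + 1))
    (hs : TileType.south (TileType.reflect pl.1 pl.2) = pres k (x, y) (x, y - 1)) :
    PlOK k (x, y) pl := by
  intro q
  by_cases h1 : q = (x + 1, y)
  · subst h1; rw [facingGlue_east]; exact he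
  by_cases h2 : q = (x - 1, y)
  · subst h2; rw [facingGlue_west]; exact hw
  by_cases h3 : q = (x, y + 1)
  · subst h3; rw [facingGlue_north]; exact hn
  by_cases h4 : q = (x, y - 1)
  · subst h4; rw [facingGlue_south]; exact hs
  rw [facingGlue_far pl _ q h1 h2 h3 h4, pres_far k _ q h1 h2 h3 h4]

lemma plok_row (k : ℕ) (x : ℤ) (hx1 : -(k:ℤ) ≤ x) (hx2 : x ≤ (k:ℤ)) (c b : Bool)
    (hc : if c = true then x ≤ 0 else 0 ≤ x) :
    PlOK k (x, 0) (Trow k (if c then -x else x), (c, b)) := by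
  apply plok_cases <;>
    (first
      | rw [pres_east] | rw [pres_west] | rw [pres_north] | rw [pres_south])
  all_goals
    cases c <;> cases b <;>
      simp only [if_true, if_false, Bool.false_eq_true, ite_true, ite_false,
        TileType.reflect, TileType.north, TileType.east, TileType.south, TileType.west,
        Trow, gl, step, vstep, true_and, and_true] at * <;>
      split_ifs <;>
      first
        | rfl
        | ((try simp only [Option.some.injEq, Prod.mk.injEq, reduceCtorEq, true_and, and_true, not_and, not_not] at *) <;> omega)

lemma plok_col (k : ℕ) (x y : ℤ) (hx1 : -(k:ℤ) ≤ x) (hx2 : x ≤ (k:ℤ))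
    (hy1 : -(k:ℤ) ≤ y) (hy2 : y ≤ (k:ℤ)) (hy0 : y ≠ 0) (c b : Bool)
    (hb : b = decide (y < 0)) :
    PlOK k (x, y) (Tcol k (if b then -y else y), (c, b)) := by
  have hy' : if b = true then y < 0 else 0 ≤ y := by
    subst hb; by_cases h : y < 0 <;> simp [h]; omega
  clear hb
  apply plok_cases <;>
    (first
      | rw [pres_east] | rw [pres_west] | rw [pres_north] | rw [pres_south])
  all_goals
    cases c <;> cases b <;>
      simp only [if_true, if_false, Bool.false_eq_true, ite_true, ite_false,
        TileType.reflect, TileType.north, TileType.east, TileType.south, TileType.west,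
        Tcol, gl, step, vstep, true_and, and_true] at * <;>
      split_ifs <;>
      first
        | rfl
        | ((try simp only [Option.some.injEq, Prod.mk.injEq, reduceCtorEq, true_and, and_true, not_and, not_not] at *) <;> omega)

end RTAMSq
namespace RTAMSq

lemma trow_ne_tcol (k : ℕ) (i j : ℤ) (hj : 0 ≤ j) : Trow k i ≠ Tcol k j := by
  intro h
  have h' := congrArg (fun t : TileType => t.2.2.1) h
  simp only [Trow, Tcol] at h'
  split_ifs at h' <;> simp only [gl, Option.some.injEq, Prod.mk.injEq, reduceCtorEq,
    and_true] at h' <;> omega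

lemma card_tilesF (k : ℕ) : (tilesF k).card = 2 * k + 1 := by
  rw [tilesF, Finset.card_union_of_disjoint, Finset.card_image_of_injective,
    Finset.card_image_of_injective, Finset.card_range, Finset.card_range]
  · ring
  · intro i j h
    have h' := congrArg (fun t : TileType => t.2.2.1) h
    simp only [Tcol] at h'
    have := gl_inj h'
    omega
  · intro i j h
    have h' := congrArg (fun t : TileType => t.2.2.2) h
    simp only [Trow, step] at h'
    split_ifs at h' <;> simp only [gl, Option.some.injEq, Prod.mk.injEq, reduceCtorEq,
      and_true, neg_inj] at h' <;> omega
  · rw [Finset.disjoint_left]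
    rintro t ht ht'
    simp only [Finset.mem_image, Finset.mem_range] at ht ht'
    obtain ⟨i, -, rfl⟩ := ht
    obtain ⟨j, -, hj⟩ := ht'
    exact trow_ne_tcol k _ _ (by positivity) hj.symm

lemma adom_seedA (k : ℕ) : adom (seedA k) = {((0 : ℤ), (0 : ℤ))} := by
  ext ⟨a, b⟩
  simp only [adom, seedA, Set.mem_setOf_eq, Set.mem_singleton_iff, Prod.mk.injEq]
  split_ifs with h
  · simp_all [Prod.ext_iff]
  · simp_all [Prod.ext_iff]

lemma seedA_stable (k : ℕ) : Stable (seedA k) 1 := by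
  intro A hA hA1 hA2
  exfalso
  obtain ⟨a, ha⟩ := hA1
  obtain ⟨b, hb⟩ := hA2
  have ha' := hA ha
  rw [adom_seedA] at ha' hb
  have : b ∈ A := by
    rw [Set.mem_singleton_iff.mp hb.1, ← Set.mem_singleton_iff.mp ha']
    exact ha
  exact hb.2 this

lemma inSq_par {k : ℕ} {p : ℤ × ℤ} (h : InSq k p) : InSq k (par p) := by
  rcases p with ⟨x, y⟩
  obtain ⟨h1, h2, h3, h4⟩ := h
  dsimp only at h1 h2 h3 h4
  simp only [par, InSq]
  by_cases hy : y = 0 <;>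
    rcases Int.lt_trichotomy x 0 with hx | hx | hx <;>
    rcases Int.lt_trichotomy y 0 with hy' | hy' | hy' <;>
    simp_all [Int.sign_eq_one_of_pos, Int.sign_eq_neg_one_of_neg] <;> omega

lemma rank_par {p : ℤ × ℤ} (h : p ≠ (0, 0)) :
    (par p).1.natAbs + (par p).2.natAbs < p.1.natAbs + p.2.natAbs := by
  rcases p with ⟨x, y⟩
  have hxy : x ≠ 0 ∨ y ≠ 0 := by
    by_contra hc; push_neg at hc; exact h (by simp [hc.1, hc.2])
  simp only [par]
  by_cases hy : y = 0
  · have hx : x ≠ 0 := by tauto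
    rcases Int.lt_trichotomy x 0 with h' | h' | h' <;>
      simp_all [Int.sign_eq_one_of_pos, Int.sign_eq_neg_one_of_neg] <;> omega
  · rcases Int.lt_trichotomy y 0 with h' | h' | h' <;>
      simp_all [Int.sign_eq_one_of_pos, Int.sign_eq_neg_one_of_neg] <;> omega

lemma par_eq_of_pos_x {x y : ℤ} (hx : 0 < x) (hy : y = 0) : par (x, y) = (x - 1, 0) := by
  subst hy
  simp [par, Int.sign_eq_one_of_pos hx]

lemma par_eq_of_neg_x {x y : ℤ} (hx : x < 0) (hy : y = 0) : par (x, y) = (x + 1, 0) := by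
  subst hy
  simp only [par, Int.sign_eq_neg_one_of_neg hx, if_pos rfl]
  norm_num

lemma par_eq_of_pos_y {x y : ℤ} (hy : 0 < y) : par (x, y) = (x, y - 1) := by
  simp [par, Int.sign_eq_one_of_pos hy, show y ≠ 0 by omega]

lemma par_eq_of_neg_y {x y : ℤ} (hy : y < 0) : par (x, y) = (x, y + 1) := by
  simp only [par, Int.sign_eq_neg_one_of_neg hy, if_neg (show y ≠ 0 by omega)]
  norm_num

lemma pres_par {k : ℕ} {p : ℤ × ℤ} (hp : InSq k p) (h0 : p ≠ (0, 0)) :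
    ∃ l : ℤ, pres k p (par p) = gl l ∧ pres k (par p) p = gl (-l) := by
  rcases p with ⟨x, y⟩
  obtain ⟨h1, h2, h3, h4⟩ := hp
  dsimp only at h1 h2 h3 h4
  by_cases hy : y = 0
  · subst hy
    have hx : x ≠ 0 := fun hc => h0 (by simp [hc])
    rcases Int.lt_trichotomy x 0 with h' | h' | h'
    · rw [par_eq_of_neg_x h' rfl]
      refine ⟨step x, ?_, ?_⟩
      · rw [pres_east, if_pos ⟨rfl, by omega⟩]
      · have h2' := pres_west k (x + 1) 0
        rw [show ((x : ℤ) + 1 - 1) = x by ring] at h2'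
        rw [h2', if_pos ⟨rfl, by omega⟩]
    · omega
    · rw [par_eq_of_pos_x h' rfl]
      refine ⟨-(step (x - 1)), ?_, ?_⟩
      · rw [pres_west, if_pos ⟨rfl, by omega⟩]
      · have h2' := pres_east k (x - 1) 0
        rw [show ((x : ℤ) - 1 + 1) = x by ring] at h2'
        rw [h2', if_pos ⟨rfl, by omega⟩, neg_neg]
  · rcases Int.lt_trichotomy y 0 with h' | h' | h'
    · rw [par_eq_of_neg_y h']
      refine ⟨vstep k y, ?_, ?_⟩
      · rw [pres_north, if_neg (by omega)]
      · have h2' := pres_south k x (y + 1)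
        rw [show ((y : ℤ) + 1 - 1) = y by ring] at h2'
        rw [h2', if_neg (by omega)]
    · omega
    · rw [par_eq_of_pos_y h']
      refine ⟨-(vstep k (y - 1)), ?_, ?_⟩
      · rw [pres_south, if_neg (by omega)]
      · have h2' := pres_north k x (y - 1)
        rw [show ((y : ℤ) - 1 + 1) = y by ring] at h2'
        rw [h2', if_neg (by omega), neg_neg]

lemma bond_par {k : ℕ} {α : Assembly} (hI : Inv k α) {p : ℤ × ℤ}
    (h0 : p ≠ (0, 0)) {a b : Placement} (hp : α p = some a) (hq : α (par p) = some b) :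
    bondStrength α p (par p) = 1 ∧ bondStrength α (par p) p = 1 := by
  obtain ⟨hIs, hIa⟩ := hI
  obtain ⟨hins, hplok, -⟩ := hIa p a hp
  obtain ⟨-, hplok', -⟩ := hIa (par p) b hq
  obtain ⟨l, hl1, hl2⟩ := pres_par hins h0
  have e1 : bondStrength α p (par p) = glueBind (pres k p (par p)) (pres k (par p) p) := by
    simp only [bondStrength, hp, hq]
    rw [hplok, hplok']
  have e2 : bondStrength α (par p) p = glueBind (pres k (par p) p) (pres k p (par p)) := by
    simp only [bondStrength, hp, hq]
    rw [hplok, hplok']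
  rw [e1, e2, hl1, hl2, glueBind_gl, glueBind_gl]
  constructor <;> simp

lemma stable_of_inv {k : ℕ} {α : Assembly} (hI : Inv k α) : Stable α 1 := by
  intro A hA hA1 hA2
  have key : ∀ m : ℕ, ∀ q : ℤ × ℤ, q.1.natAbs + q.2.natAbs ≤ m → q ∈ adom α →
      (((0, 0) : ℤ × ℤ) ∈ A ↔ q ∉ A) →
      ∃ E : Finset ((ℤ × ℤ) × (ℤ × ℤ)),
        (∀ e ∈ E, e.1 ∈ A ∧ e.2 ∈ adom α \ A) ∧
        1 ≤ ∑ e ∈ E, bondStrength α e.1 e.2 := by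
    intro m
    induction m with
    | zero =>
      intro q hq hqd hiff
      have : q = (0, 0) := by
        rcases q with ⟨a, b⟩
        simp only at hq
        have : a = 0 ∧ b = 0 := by omega
        simp [this.1, this.2]
      rw [this] at hiff
      tauto
    | succ m ih =>
      intro q hq hqd hiff
      by_cases hq0 : q = (0, 0)
      · rw [hq0] at hiff; tauto
      obtain ⟨a, ha⟩ := Option.ne_none_iff_exists'.mp hqd
      obtain ⟨-, -, hpar⟩ := hI.2 q a ha
      have hpard : par q ∈ adom α := hpar hq0
      obtain ⟨b, hb⟩ := Option.ne_none_iff_exists'.mp hpard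
      by_cases hqA : q ∈ A
      · have h0A : ((0, 0) : ℤ × ℤ) ∉ A := by tauto
        by_cases hpA : par q ∈ A
        · exact ih (par q) (by have := rank_par hq0; omega) hpard (by tauto)
        · refine ⟨{(q, par q)}, ?_, ?_⟩
          · intro e he
            rw [Finset.mem_singleton] at he
            rw [he]
            exact ⟨hqA, hpard, hpA⟩
          · rw [Finset.sum_singleton, (bond_par hI hq0 ha hb).1]
      · have h0A : ((0, 0) : ℤ × ℤ) ∈ A := by tauto
        by_cases hpA : par q ∈ A
        · refine ⟨{(par q, q)}, ?_, ?_⟩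
          · intro e he
            rw [Finset.mem_singleton] at he
            rw [he]
            exact ⟨hpA, hqd, hqA⟩
          · rw [Finset.sum_singleton, (bond_par hI hq0 ha hb).2]
        · exact ih (par q) (by have := rank_par hq0; omega) hpard (by tauto)
  by_cases h0A : ((0, 0) : ℤ × ℤ) ∈ A
  · obtain ⟨b, hb⟩ := hA2
    rw [Set.mem_diff] at hb
    exact key _ b le_rfl hb.1 ⟨fun _ => hb.2, fun _ => h0A⟩
  · obtain ⟨a, ha⟩ := hA1
    exact key _ a le_rfl (hA ha) ⟨fun h => absurd h h0A, fun hna => absurd ha hna⟩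

end RTAMSq
namespace RTAMSq

lemma reflect_north (t : TileType) (r : Reflection) :
    TileType.north (t.reflect r) = if r.2 then t.2.2.1 else t.1 := rfl

lemma reflect_east (t : TileType) (r : Reflection) :
    TileType.east (t.reflect r) = if r.1 then t.2.2.2 else t.2.1 := rfl

lemma reflect_south (t : TileType) (r : Reflection) :
    TileType.south (t.reflect r) = if r.2 then t.1 else t.2.2.1 := rfl

lemma reflect_west (t : TileType) (r : Reflection) :
    TileType.west (t.reflect r) = if r.1 then t.2.1 else t.2.2.2 := rfl

set_option maxHeartbeats 1000000 in
lemma pres_some_cases {k : ℕ} {q p : ℤ × ℤ} {g : ℤ × ℕ} (h : pres k q p = some g) :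
    (p = (q.1 + 1, q.2) ∧ q.2 = 0 ∧ q.1 ≠ (k:ℤ) ∧ g = (step q.1, 1)) ∨
    (p = (q.1 - 1, q.2) ∧ q.2 = 0 ∧ q.1 ≠ -(k:ℤ) ∧ g = (-(step (q.1 - 1)), 1)) ∨
    (p = (q.1, q.2 + 1) ∧ q.2 ≠ (k:ℤ) ∧ g = (vstep k q.2, 1)) ∨
    (p = (q.1, q.2 - 1) ∧ q.2 ≠ -(k:ℤ) ∧ g = (-(vstep k (q.2 - 1)), 1)) := by
  simp only [pres] at h
  split_ifs at h with h1 h2 h3 h4 h5 h6 h7 h8 <;>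
    first
      | exact Option.noConfusion h
      | (simp only [gl, Option.some.injEq] at h; tauto)

/-- Updating an assembly satisfying the invariant with a correctly placed tile whose
parent is occupied preserves the invariant. -/
lemma inv_update {k : ℕ} {α : Assembly} (hI : Inv k α) {p : ℤ × ℤ} {pl : Placement}
    (hIn : InSq k p) (hPl : PlOK k p pl) (hpar : α (par p) ≠ none) (hp0 : p ≠ (0, 0)) :
    Inv k (Function.update α p (some pl)) := by
  constructor
  · rw [Function.update_of_ne (fun h => hp0 h.symm)]
    exact hI.1
  · intro p' pl' hp'
    by_cases hpp : p' = p
    · subst hpp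
      rw [Function.update_self] at hp'
      obtain rfl : pl = pl' := Option.some.inj hp'
      refine ⟨hIn, hPl, fun _ => ?_⟩
      by_cases hq : par p' = p'
      · rw [hq, Function.update_self]; simp
      · rw [Function.update_of_ne hq]; exact hpar
    · rw [Function.update_of_ne hpp] at hp'
      obtain ⟨i1, i2, i3⟩ := hI.2 p' pl' hp'
      refine ⟨i1, i2, fun h0 => ?_⟩
      by_cases hq : par p' = p
      · rw [hq, Function.update_self]; simp
      · rw [Function.update_of_ne hq]; exact i3 h0

lemma attach_inv {k : ℕ} {α : Assembly} (hI : Inv k α) {p : ℤ × ℤ} {t : TileType}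
    {r : Reflection} (hnone : α p = none) (ht : t ∈ tilesF k)
    (hst : Stable (Function.update α p (some (t, r))) 1) :
    Inv k (Function.update α p (some (t, r))) := by
  have hp0 : p ≠ (0, 0) := fun h => by rw [h, hI.1] at hnone; cases hnone
  have hβp : Function.update α p (some (t, r)) p = some (t, r) := Function.update_self _ _ _
  have hβne : ∀ q, q ≠ p → Function.update α p (some (t, r)) q = α q :=
    fun q hq => Function.update_of_ne hq _ _
  -- the new tile binds some occupied neighbour q
  obtain ⟨E, hE, hsum⟩ := hst {p}
    (by intro z hz; rw [Set.mem_singleton_iff] at hz; subst hz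
        simp only [adom, Set.mem_setOf_eq, hβp]; simp)
    ⟨p, rfl⟩
    ⟨(0, 0), by
      refine ⟨?_, fun h => hp0 (Set.mem_singleton_iff.mp h).symm⟩
      simp only [adom, Set.mem_setOf_eq, hβne (0,0) (fun h => hp0 h.symm), hI.1]
      simp⟩
  obtain ⟨e, heE, hepos⟩ : ∃ e ∈ E, 0 < bondStrength (Function.update α p (some (t, r))) e.1 e.2 := by
    by_contra hc
    push_neg at hc
    have : ∑ e ∈ E, bondStrength (Function.update α p (some (t, r))) e.1 e.2 = 0 :=
      Finset.sum_eq_zero fun e he => by have := hc e he; omega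
    omega
  obtain ⟨he1, he2⟩ := hE e heE
  rw [Set.mem_singleton_iff] at he1
  rw [Set.mem_diff, Set.mem_singleton_iff] at he2
  have hq : α e.2 ≠ none := by
    have h2 := he2.1
    simp only [adom, Set.mem_setOf_eq] at h2
    rwa [hβne e.2 he2.2] at h2
  obtain ⟨bq, hbq⟩ := Option.ne_none_iff_exists'.mp hq
  obtain ⟨hqIn, hqPl, hqPar⟩ := hI.2 e.2 bq hbq
  have hbond : 0 < glueBind (facingGlue (t, r) p e.2) (pres k e.2 p) := by
    have hb' : bondStrength (Function.update α p (some (t, r))) p e.2 =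
        glueBind (facingGlue (t, r) p e.2) (facingGlue bq e.2 p) := by
      simp only [bondStrength, hβp, hβne e.2 he2.2, hbq]
    have h3 : 0 < bondStrength (Function.update α p (some (t, r))) p e.2 := he1 ▸ hepos
    rw [hb', hqPl p] at h3
    exact h3
  obtain ⟨l, s, hfc, hpr, hspos⟩ := glueBind_pos hbond
  obtain ⟨hq1, hq2, hq3, hq4⟩ := hqIn
  set q := e.2 with hqdef
  rcases pres_some_cases hpr with ⟨hpeq, hy0, hxk, hg⟩ | ⟨hpeq, hy0, hxk, hg⟩ |
      ⟨hpeq, hyk, hg⟩ | ⟨hpeq, hyk, hg⟩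
  -- Case 1 : q is west of p, growth to the east along the row
  · rw [Prod.mk.injEq] at hg
    obtain ⟨hgl, rfl⟩ : -l = step q.1 ∧ s = 1 := ⟨hg.1, hg.2⟩
    by_cases hqx : q.1 < 0
    · exfalso
      have hq0 : q ≠ (0, 0) := fun h => by rw [h] at hqx; simp at hqx
      have hocc := hqPar hq0
      rw [par_eq_of_neg_x hqx hy0] at hocc
      have hp' : p = (q.1 + 1, 0) := by rw [hpeq, hy0]
      exact hocc (hp' ▸ hnone)
    · push_neg at hqx
      have hl' : l = -(q.1 + 1) := by simp only [step, if_pos hqx] at hgl; omega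
      have hW : (if r.1 then t.2.1 else t.2.2.2) = some (l, 1) := by
        have hfs := facingGlue_west (t, r) (q.1 + 1) q.2
        rw [show ((q.1 : ℤ) + 1 - 1) = q.1 by ring, Prod.mk.eta, reflect_west] at hfs
        rw [← hfs, ← hpeq]
        exact hfc
      rcases mem_tilesF.mp ht with ⟨j, hj0, hjk, rfl⟩ | ⟨j, hj1, hjk, rfl⟩
      · rcases r with ⟨r1, r2⟩
        cases r1
        · simp only [Bool.false_eq_true, if_false, Trow, step] at hW
          split_ifs at hW with h1 h2 h3 <;>
            simp only [gl, Option.some.injEq, Prod.mk.injEq, reduceCtorEq, and_true] at hW <;>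
            (try omega)
          -- alive branch : j ≥ 1 and -j = l, so j = q.1 + 1
          obtain rfl : j = q.1 + 1 := by omega
          have hIn : InSq k p := by
            rw [hpeq]; refine ⟨?_, ?_, ?_, ?_⟩ <;> dsimp only <;> omega
          have hPl : PlOK k p (Trow k (q.1 + 1), (false, r2)) := by
            have hpl := plok_row k (q.1 + 1) (by omega) (by omega) false r2 (by simp; omega)
            simp only [Bool.false_eq_true, if_false] at hpl
            rw [hpeq, hy0]
            exact hpl
          have hpar : α (par p) ≠ none := by
            have hpp : par p = q := by
              rw [hpeq, hy0, par_eq_of_pos_x (by omega) rfl,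
                show ((q.1 : ℤ) + 1 - 1) = q.1 by ring, ← hy0, Prod.mk.eta]
            rw [hpp, hbq]; simp
          exact inv_update hI hIn hPl hpar hp0
        · exfalso
          simp only [if_true, Trow, step] at hW
          split_ifs at hW <;>
            simp only [gl, Option.some.injEq, Prod.mk.injEq, reduceCtorEq, and_true] at hW <;>
            omega
      · exfalso
        rcases r with ⟨r1, r2⟩
        cases r1 <;> simp [Tcol] at hW
  -- Case 2 : q is east of p, growth to the west along the row
  · rw [Prod.mk.injEq] at hg
    obtain ⟨hgl, rfl⟩ : -l = -(step (q.1 - 1)) ∧ s = 1 := ⟨hg.1, hg.2⟩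
    by_cases hqx : 0 < q.1
    · exfalso
      have hq0 : q ≠ (0, 0) := fun h => by rw [h] at hqx; simp at hqx
      have hocc := hqPar hq0
      rw [par_eq_of_pos_x hqx hy0] at hocc
      have hp' : p = (q.1 - 1, 0) := by rw [hpeq, hy0]
      exact hocc (hp' ▸ hnone)
    · push_neg at hqx
      have hl' : l = q.1 - 1 := by
        simp only [step, if_neg (show ¬(0:ℤ) ≤ q.1 - 1 by omega)] at hgl; omega
      have hW : (if r.1 then t.2.2.2 else t.2.1) = some (l, 1) := by
        have hfs := facingGlue_east (t, r) (q.1 - 1) q.2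
        rw [show ((q.1 : ℤ) - 1 + 1) = q.1 by ring, Prod.mk.eta, reflect_east] at hfs
        rw [← hfs, ← hpeq]
        exact hfc
      rcases mem_tilesF.mp ht with ⟨j, hj0, hjk, rfl⟩ | ⟨j, hj1, hjk, rfl⟩
      · rcases r with ⟨r1, r2⟩
        cases r1
        · exfalso
          simp only [Bool.false_eq_true, if_false, Trow, step] at hW
          split_ifs at hW <;>
            simp only [gl, Option.some.injEq, Prod.mk.injEq, reduceCtorEq, and_true] at hW <;>
            omega
        · simp only [if_true, Trow, step] at hW
          split_ifs at hW with h1 h2 h3 <;>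
            simp only [gl, Option.some.injEq, Prod.mk.injEq, reduceCtorEq, and_true] at hW <;>
            (try omega)
          obtain rfl : j = -(q.1 - 1) := by omega
          have hIn : InSq k p := by
            rw [hpeq]; refine ⟨?_, ?_, ?_, ?_⟩ <;> dsimp only <;> omega
          have hPl : PlOK k p (Trow k (-(q.1 - 1)), (true, r2)) := by
            have hpl := plok_row k (q.1 - 1) (by omega) (by omega) true r2 (by simp; omega)
            simp only [if_true] at hpl
            rw [hpeq, hy0]
            exact hpl
          have hpar : α (par p) ≠ none := by
            have hpp : par p = q := by
              rw [hpeq, hy0, par_eq_of_neg_x (by omega) rfl,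
                show ((q.1 : ℤ) - 1 + 1) = q.1 by ring, ← hy0, Prod.mk.eta]
            rw [hpp, hbq]; simp
          exact inv_update hI hIn hPl hpar hp0
      · exfalso
        rcases r with ⟨r1, r2⟩
        cases r1 <;> simp [Tcol] at hW
  -- Case 3 : q is below p, growth upward along a column
  · rw [Prod.mk.injEq] at hg
    obtain ⟨hgl, rfl⟩ : -l = vstep k q.2 ∧ s = 1 := ⟨hg.1, hg.2⟩
    by_cases hqy : q.2 < 0
    · exfalso
      have hq0 : q ≠ (0, 0) := fun h => by rw [h] at hqy; simp at hqy
      have hocc := hqPar hq0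
      rw [par_eq_of_neg_y hqy] at hocc
      exact hocc (hpeq ▸ hnone)
    · push_neg at hqy
      have hl' : l = -((k : ℤ) + q.2 + 1) := by
        simp only [vstep, if_pos hqy] at hgl; omega
      have hW : (if r.2 then t.1 else t.2.2.1) = some (l, 1) := by
        have hfs := facingGlue_south (t, r) q.1 (q.2 + 1)
        rw [show ((q.2 : ℤ) + 1 - 1) = q.2 by ring, Prod.mk.eta, reflect_south] at hfs
        rw [← hfs, ← hpeq]
        exact hfc
      rcases mem_tilesF.mp ht with ⟨j, hj0, hjk, rfl⟩ | ⟨j, hj1, hjk, rfl⟩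
      · exfalso
        rcases r with ⟨r1, r2⟩
        cases r2 <;>
          simp only [Bool.false_eq_true, if_false, if_true, Trow] at hW <;>
          split_ifs at hW <;>
          simp only [gl, Option.some.injEq, Prod.mk.injEq, reduceCtorEq, and_true] at hW <;>
          omega
      · rcases r with ⟨r1, r2⟩
        cases r2
        · simp only [Bool.false_eq_true, if_false, Tcol] at hW
          simp only [gl, Option.some.injEq, Prod.mk.injEq, and_true] at hW
          obtain rfl : j = q.2 + 1 := by omega
          have hIn : InSq k p := by
            rw [hpeq]; refine ⟨?_, ?_, ?_, ?_⟩ <;> dsimp only <;> omega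
          have hPl : PlOK k p (Tcol k (q.2 + 1), (r1, false)) := by
            have hpl := plok_col k q.1 (q.2 + 1) (by omega) (by omega) (by omega) (by omega)
              (by omega) r1 false (by rw [eq_comm, decide_eq_false_iff_not]; omega)
            simp only [Bool.false_eq_true, if_false] at hpl
            rw [hpeq]
            exact hpl
          have hpar : α (par p) ≠ none := by
            have hpp : par p = q := by
              rw [hpeq, par_eq_of_pos_y (by omega),
                show ((q.2 : ℤ) + 1 - 1) = q.2 by ring, Prod.mk.eta]
            rw [hpp, hbq]; simp
          exact inv_update hI hIn hPl hpar hp0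
        · exfalso
          simp only [if_true, Tcol] at hW
          split_ifs at hW <;>
            simp only [gl, Option.some.injEq, Prod.mk.injEq, reduceCtorEq, and_true] at hW <;>
            omega
  -- Case 4 : q is above p, growth downward along a column
  · rw [Prod.mk.injEq] at hg
    obtain ⟨hgl, rfl⟩ : -l = -(vstep k (q.2 - 1)) ∧ s = 1 := ⟨hg.1, hg.2⟩
    by_cases hqy : 0 < q.2
    · exfalso
      have hq0 : q ≠ (0, 0) := fun h => by rw [h] at hqy; simp at hqy
      have hocc := hqPar hq0
      rw [par_eq_of_pos_y hqy] at hocc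
      exact hocc (hpeq ▸ hnone)
    · push_neg at hqy
      have hl' : l = q.2 - 1 - (k : ℤ) := by
        simp only [vstep, if_neg (show ¬(0:ℤ) ≤ q.2 - 1 by omega)] at hgl; omega
      have hW : (if r.2 then t.2.2.1 else t.1) = some (l, 1) := by
        have hfs := facingGlue_north (t, r) q.1 (q.2 - 1)
        rw [show ((q.2 : ℤ) - 1 + 1) = q.2 by ring, Prod.mk.eta, reflect_north] at hfs
        rw [← hfs, ← hpeq]
        exact hfc
      rcases mem_tilesF.mp ht with ⟨j, hj0, hjk, rfl⟩ | ⟨j, hj1, hjk, rfl⟩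
      · exfalso
        rcases r with ⟨r1, r2⟩
        cases r2 <;>
          simp only [Bool.false_eq_true, if_false, if_true, Trow] at hW <;>
          split_ifs at hW <;>
          simp only [gl, Option.some.injEq, Prod.mk.injEq, reduceCtorEq, and_true] at hW <;>
          omega
      · rcases r with ⟨r1, r2⟩
        cases r2
        · exfalso
          simp only [Bool.false_eq_true, if_false, Tcol] at hW
          split_ifs at hW <;>
            simp only [gl, Option.some.injEq, Prod.mk.injEq, reduceCtorEq, and_true] at hW <;>
            omega
        · simp only [if_true, Tcol] at hW
          simp only [gl, Option.some.injEq, Prod.mk.injEq, and_true] at hW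
          obtain rfl : j = -(q.2 - 1) := by omega
          have hIn : InSq k p := by
            rw [hpeq]; refine ⟨?_, ?_, ?_, ?_⟩ <;> dsimp only <;> omega
          have hPl : PlOK k p (Tcol k (-(q.2 - 1)), (r1, true)) := by
            have hpl := plok_col k q.1 (q.2 - 1) (by omega) (by omega) (by omega) (by omega)
              (by omega) r1 true (by rw [eq_comm, decide_eq_true_eq]; omega)
            simp only [if_true] at hpl
            rw [hpeq]
            exact hpl
          have hpar : α (par p) ≠ none := by
            have hpp : par p = q := by
              rw [hpeq, par_eq_of_neg_y (by omega),
                show ((q.2 : ℤ) - 1 + 1) = q.2 by ring, Prod.mk.eta]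
            rw [hpp, hbq]; simp
          exact inv_update hI hIn hPl hpar hp0

end RTAMSq
namespace RTAMSq

lemma seedA_inv (k : ℕ) : Inv k (seedA k) := by
  constructor
  · simp [seedA]
  · intro p pl hp
    simp only [seedA] at hp
    split_ifs at hp with h
    subst h
    obtain rfl := (Option.some.inj hp).symm
    have hpl := plok_row k 0 (by omega) (by omega) false false (by norm_num)
    have hpl' : PlOK k (0, 0) (Trow k 0, (false, false)) := hpl
    exact ⟨⟨by dsimp only; omega, by dsimp only; omega, by dsimp only; omega,
      by dsimp only; omega⟩, hpl', fun h0 => (h0 rfl).elim⟩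

lemma producible_inv {k : ℕ} {S : RTAS} (hseed : S.seed = seedA k)
    (htiles : S.tiles = tilesF k) (htemp : S.temp = 1) {α : Assembly}
    (hprod : Producible S α) : Inv k α := by
  obtain ⟨f, hf0, hfstep, hflim⟩ := hprod
  have hInv : ∀ n, Inv k (f n) := by
    intro n
    induction n with
    | zero => rw [hf0, hseed]; exact seedA_inv k
    | succ n ih =>
      rcases hfstep n with h | h
      · rw [h]; exact ih
      · obtain ⟨p, t, r, hnone, ht, heq, hstab⟩ := h
        rw [heq]
        rw [heq, htemp] at hstab
        exact attach_inv ih hnone (htiles ▸ ht) hstab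
  constructor
  · exact (hflim (0, 0) _).mpr ⟨0, by rw [hf0, hseed]; simp [seedA]⟩
  · intro p pl hp
    obtain ⟨n, hn⟩ := (hflim p pl).mp hp
    obtain ⟨i1, i2, i3⟩ := (hInv n).2 p pl hn
    refine ⟨i1, i2, fun h0 => ?_⟩
    obtain ⟨b, hb⟩ := Option.ne_none_iff_exists'.mp (i3 h0)
    have : α (par p) = some b := (hflim _ _).mpr ⟨n, hb⟩
    simp [this]

lemma can_attach {k : ℕ} {S : RTAS} (htiles : S.tiles = tilesF k) (htemp : S.temp = 1)
    {α : Assembly} {p : ℤ × ℤ} {t : TileType} {r : Reflection}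
    (hI : Inv k α) (hnone : α p = none) (hp0 : p ≠ (0, 0)) (hIn : InSq k p)
    (hPl : PlOK k p (t, r)) (ht : t ∈ tilesF k) (hpar : α (par p) ≠ none) :
    Attaches S α (Function.update α p (some (t, r))) :=
  ⟨p, t, r, hnone, by rw [htiles]; exact ht, rfl,
    by rw [htemp]; exact stable_of_inv (inv_update hI hIn hPl hpar hp0)⟩

lemma terminal_dom {k : ℕ} {S : RTAS} (hseed : S.seed = seedA k)
    (htiles : S.tiles = tilesF k) (htemp : S.temp = 1) {α : Assembly}
    (hterm : Terminal S α) : adom α = {p | InSq k p} := by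
  have hI : Inv k α := producible_inv hseed htiles htemp hterm.1
  apply Set.eq_of_subset_of_subset
  · intro p hp
    obtain ⟨pl, hpl⟩ := Option.ne_none_iff_exists'.mp hp
    exact (hI.2 p pl hpl).1
  · have grow : ∀ m : ℕ, ∀ p : ℤ × ℤ, p.1.natAbs + p.2.natAbs ≤ m → InSq k p →
        α p = none → False := by
      intro m
      induction m with
      | zero =>
        intro p hm _ hnone
        have hp00 : p = (0, 0) := by
          rcases p with ⟨a, b⟩
          simp only at hm
          have : a = 0 ∧ b = 0 := by omega
          simp [this.1, this.2]
        rw [hp00, hI.1] at hnone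
        cases hnone
      | succ m ih =>
        intro p hm hIn hnone
        have hp0 : p ≠ (0, 0) := fun h => by rw [h, hI.1] at hnone; cases hnone
        by_cases hpar : α (par p) = none
        · exact ih (par p) (by have := rank_par hp0; omega) (inSq_par hIn) hpar
        · obtain ⟨h1, h2, h3, h4⟩ := hIn
          by_cases hy : p.2 = 0
          · by_cases hx : p.1 < 0
            · have hPl : PlOK k p (Trow k (-p.1), (true, false)) := by
                have hpl := plok_row k p.1 h1 h2 true false (by simp; omega)
                simp only [if_true] at hpl
                rwa [← hy, Prod.mk.eta] at hpl
              have hmem : Trow k (-p.1) ∈ tilesF k :=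
                mem_tilesF.mpr (Or.inl ⟨-p.1, by omega, by omega, rfl⟩)
              exact hterm.2 _
                (can_attach htiles htemp hI hnone hp0 ⟨h1, h2, h3, h4⟩ hPl hmem hpar)
            · have hPl : PlOK k p (Trow k p.1, (false, false)) := by
                have hpl := plok_row k p.1 h1 h2 false false (by simp; omega)
                simp only [Bool.false_eq_true, if_false] at hpl
                rwa [← hy, Prod.mk.eta] at hpl
              have hmem : Trow k p.1 ∈ tilesF k :=
                mem_tilesF.mpr (Or.inl ⟨p.1, by omega, by omega, rfl⟩)
              exact hterm.2 _
                (can_attach htiles htemp hI hnone hp0 ⟨h1, h2, h3, h4⟩ hPl hmem hpar)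
          · by_cases hyn : p.2 < 0
            · have hPl : PlOK k p (Tcol k (-p.2), (false, true)) := by
                have hpl := plok_col k p.1 p.2 h1 h2 h3 h4 hy false true
                  (by rw [eq_comm, decide_eq_true_eq]; omega)
                simp only [if_true] at hpl
                rwa [Prod.mk.eta] at hpl
              have hmem : Tcol k (-p.2) ∈ tilesF k :=
                mem_tilesF.mpr (Or.inr ⟨-p.2, by omega, by omega, rfl⟩)
              exact hterm.2 _
                (can_attach htiles htemp hI hnone hp0 ⟨h1, h2, h3, h4⟩ hPl hmem hpar)
            · have hPl : PlOK k p (Tcol k p.2, (false, false)) := by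
                have hpl := plok_col k p.1 p.2 h1 h2 h3 h4 hy false false
                  (by rw [eq_comm, decide_eq_false_iff_not]; omega)
                simp only [Bool.false_eq_true, if_false] at hpl
                rwa [Prod.mk.eta] at hpl
              have hmem : Tcol k p.2 ∈ tilesF k :=
                mem_tilesF.mpr (Or.inr ⟨p.2, by omega, by omega, rfl⟩)
              exact hterm.2 _
                (can_attach htiles htemp hI hnone hp0 ⟨h1, h2, h3, h4⟩ hPl hmem hpar)
    intro p hp
    by_contra hnot
    have hnone : α p = none := by
      by_contra h
      exact hnot h
    exact grow _ p le_rfl hp hnone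

end RTAMSq
/-- For every odd `n ∈ ℤ⁺`, some singly seeded temperature-1 RTAM system
with exactly `n` tile types strictly self-assembles an `n × n` square. -/
theorem rtam_odd_square_n_tiles
    (n : ℕ) (hn : Odd n) :
    ∃ Sys : RTAS, Sys.temp = 1 ∧ Sys.tiles.card = n ∧ SinglySeeded Sys ∧
      StrictlySelfAssembles Sys (squareShape n) := by
  obtain ⟨k, hk⟩ := hn
  have hk' : n = 2 * k + 1 := by omega
  subst hk'
  refine ⟨⟨RTAMSq.tilesF k, RTAMSq.seedA k, 1, ?_, ?_, ?_, ?_⟩, rfl, ?_, ?_, ?_⟩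
  · rw [RTAMSq.adom_seedA]; exact ⟨_, rfl⟩
  · rw [RTAMSq.adom_seedA]; exact Set.finite_singleton _
  · intro p pl h
    simp only [RTAMSq.seedA] at h
    split_ifs at h with h'
    obtain rfl := (Option.some.inj h).symm
    exact RTAMSq.mem_tilesF.mpr (Or.inl ⟨0, le_rfl, by omega, rfl⟩)
  · exact RTAMSq.seedA_stable k
  · exact RTAMSq.card_tilesF k
  · exact ⟨(0, 0), RTAMSq.adom_seedA k⟩
  · intro α hterm
    have hdom := RTAMSq.terminal_dom rfl rfl rfl hterm
    refine ⟨(false, false), ((k : ℤ), (k : ℤ)), ?_⟩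
    ext p
    have h1 : transform α (false, false) ((k : ℤ), (k : ℤ)) p =
        (α (p.1 - k, p.2 - k)).map
          (fun pl => (pl.1, Reflection.comp (false, false) pl.2)) := rfl
    simp only [adom, Set.mem_setOf_eq, h1, ne_eq, Option.map_eq_none_iff, squareShape, rectShape]
    have hm := Set.ext_iff.mp hdom (p.1 - k, p.2 - k)
    simp only [adom, Set.mem_setOf_eq, ne_eq, RTAMSq.InSq] at hm
    constructor
    · intro h
      obtain ⟨b1, b2, b3, b4⟩ := hm.mp h
      refine ⟨by omega, by push_cast; omega, by omega, by push_cast; omega⟩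
    · intro h
      obtain ⟨b1, b2, b3, b4⟩ := h
      push_cast at b2 b4
      apply hm.mpr
      refine ⟨?_, ?_, ?_, ?_⟩ <;> omega
end

section
/- For all odd n, m ∈ ℤ⁺, there exists an RTAM system 𝒯 = (T, σ, 1) at temperature 1 with |T| = (n + m)/2 and |dom σ| = 1 such that 𝒯 strictly self-assembles an n × m rectangle. -/
instance : DecidableEq (Glue × Glue) := inferInstance
instance : DecidableEq TileType := inferInstance
set_option linter.unreachableTactic false
set_option linter.unusedTactic false
set_option linter.unnecessarySeqFocus false
set_option maxHeartbeats 1000000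
/-! ## Construction -/

def H0t (b : ℕ) : TileType :=
  (some (1,1), some ((b:ℤ)+1,1), some (1,1), some ((b:ℤ)+1,1))

def Ht (a b j : ℕ) : TileType :=
  (some (1,1), if j < a then some ((b:ℤ)+(j:ℤ)+1,1) else none, some (1,1),
   some (-((b:ℤ)+(j:ℤ)),1))

def Vt (b k : ℕ) : TileType :=
  (if k < b then some ((k:ℤ)+1,1) else none, none, some (-(k:ℤ),1), none)

def tilesAB (a b : ℕ) : Finset TileType :=
  ({H0t b} ∪ (Finset.Icc 1 a).image (Ht a b)) ∪ (Finset.Icc 1 b).image (Vt b)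

lemma mem_tilesAB {a b : ℕ} {t : TileType} :
    t ∈ tilesAB a b ↔ t = H0t b ∨ (∃ j, 1 ≤ j ∧ j ≤ a ∧ t = Ht a b j) ∨
      (∃ k, 1 ≤ k ∧ k ≤ b ∧ t = Vt b k) := by
  simp [tilesAB, Finset.mem_union, Finset.mem_image, Finset.mem_Icc, or_assoc, eq_comm,
    and_assoc]

lemma card_tilesAB (a b : ℕ) : (tilesAB a b).card = a + b + 1 := by
  have hH : Set.InjOn (Ht a b) (Finset.Icc 1 a) := by
    intro i hi j hj hij
    simp only [Finset.coe_Icc, Set.mem_Icc] at hi hj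
    have := congrArg (fun t : TileType => t.2.2.2) hij
    simp only [Ht] at this
    have : -((b:ℤ)+(i:ℤ)) = -((b:ℤ)+(j:ℤ)) := by
      simpa using congrArg (Option.map Prod.fst) this
    omega
  have hV : Set.InjOn (Vt b) (Finset.Icc 1 b) := by
    intro i hi j hj hij
    simp only [Finset.coe_Icc, Set.mem_Icc] at hi hj
    have := congrArg (fun t : TileType => t.2.2.1) hij
    simp only [Vt] at this
    have : -(i:ℤ) = -(j:ℤ) := by
      simpa using congrArg (Option.map Prod.fst) this
    omega
  have h1 : ({H0t b} ∪ (Finset.Icc 1 a).image (Ht a b)).card = 1 + a := by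
    rw [Finset.card_union_of_disjoint, Finset.card_singleton,
      Finset.card_image_of_injOn hH, Nat.card_Icc]
    · omega
    · simp only [Finset.disjoint_singleton_left, Finset.mem_image, Finset.mem_Icc]
      rintro ⟨j, hj, hEq⟩
      have := congrArg (fun t : TileType => t.2.2.2) hEq
      simp only [Ht, H0t] at this
      have : ((b:ℤ)+(j:ℤ)) = -((b:ℤ)+1) := by
        have h2 := congrArg (Option.map Prod.fst) this
        simp at h2
        omega
      omega
  rw [tilesAB, Finset.card_union_of_disjoint, h1, Finset.card_image_of_injOn hV,
    Nat.card_Icc]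
  · omega
  · rw [Finset.disjoint_left]
    rintro t ht htV
    rw [Finset.mem_image] at htV
    obtain ⟨k, hk, hEq⟩ := htV
    rw [Finset.mem_Icc] at hk
    simp only [Finset.mem_union, Finset.mem_singleton, Finset.mem_image,
      Finset.mem_Icc] at ht
    have hS := congrArg (fun t : TileType => t.2.2.1) hEq.symm
    simp only [Vt] at hS
    rcases ht with h | ⟨j, hj, hEq2⟩
    · rw [h] at hS
      simp only [H0t] at hS
      have := congrArg (Option.map Prod.fst) hS
      simp at this
      omega
    · rw [← hEq2] at hS
      simp only [Ht] at hS
      have := congrArg (Option.map Prod.fst) hS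
      simp at this
      omega

/-! ## Seed and system -/

def seedA (b : ℕ) : Assembly :=
  fun p => if p = ((0:ℤ), (0:ℤ)) then some (H0t b, (false, false)) else none

lemma adom_seedA (b : ℕ) : adom (seedA b) = {((0:ℤ),(0:ℤ))} := by
  ext p
  simp only [adom, seedA, Set.mem_setOf_eq, Set.mem_singleton_iff]
  split <;> simp_all

lemma seedA_stable (b τ : ℕ) : Stable (seedA b) τ := by
  intro A hA hne hne'
  exfalso
  rw [adom_seedA] at hA hne'
  obtain ⟨p, hp⟩ := hne
  obtain ⟨q, hq, hq'⟩ := hne'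
  have := hA hp
  simp_all [Set.subset_singleton_iff]

def sysAB (a b : ℕ) : RTAS where
  tiles := tilesAB a b
  seed := seedA b
  temp := 1
  seed_nonempty := by rw [adom_seedA]; exact ⟨_, rfl⟩
  seed_finite := by rw [adom_seedA]; exact Set.finite_singleton _
  seed_tiles := by
    intro p pl h
    simp only [seedA] at h
    split at h
    · cases h; exact mem_tilesAB.2 (Or.inl rfl)
    · cases h
  seed_stable := seedA_stable b 1

/-! ## Glue and bond basics -/

lemma glueBind_pos {g h : Glue} (hgh : 0 < glueBind g h) :
    ∃ l s, g = some (l, s) ∧ h = some (-l, s) ∧ 0 < s := by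
  match g, h with
  | some (l₁, s₁), some (l₂, s₂) =>
    simp only [glueBind] at hgh
    split at hgh
    · rename_i hc
      exact ⟨l₁, s₁, rfl, by rw [hc.1, hc.2], hgh⟩
    · omega
  | some _, none => simp [glueBind] at hgh
  | none, _ => simp [glueBind] at hgh

lemma glueBind_comm (g h : Glue) : glueBind g h = glueBind h g := by
  match g, h with
  | some (l₁, s₁), some (l₂, s₂) =>
    simp only [glueBind]
    by_cases h1 : l₂ = -l₁ ∧ s₂ = s₁
    · rw [if_pos h1, if_pos ⟨by omega, h1.2.symm⟩, h1.2]
    · rw [if_neg h1, if_neg]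
      rintro ⟨ha, hb⟩
      exact h1 ⟨by omega, hb.symm⟩
  | some _, none => rfl
  | none, some _ => rfl
  | none, none => rfl

lemma bondStrength_pos {α : Assembly} {p q : ℤ × ℤ} (h : 0 < bondStrength α p q) :
    ∃ u v, α p = some u ∧ α q = some v ∧
      0 < glueBind (facingGlue u p q) (facingGlue v q p) := by
  unfold bondStrength at h
  match hp : α p, hq : α q with
  | some u, some v => rw [hp, hq] at h; exact ⟨u, v, rfl, rfl, h⟩
  | some _, none => rw [hp, hq] at h; simp at h
  | none, _ => rw [hp] at h; simp at h

lemma bondStrength_comm (α : Assembly) (p q : ℤ × ℤ) :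
    bondStrength α p q = bondStrength α q p := by
  unfold bondStrength
  match hp : α p, hq : α q with
  | some u, some v => exact glueBind_comm _ _
  | some _, none => rfl
  | none, some _ => rfl
  | none, none => rfl

lemma bondAdj_symm {α : Assembly} {p q : ℤ × ℤ} (h : BondAdj α p q) : BondAdj α q p := by
  unfold BondAdj at *; rwa [bondStrength_comm]

lemma bondAdj_mem {α : Assembly} {p q : ℤ × ℤ} (h : BondAdj α p q) :
    p ∈ adom α ∧ q ∈ adom α := by
  obtain ⟨u, v, hu, hv, -⟩ := bondStrength_pos h
  exact ⟨by simp [adom, hu], by simp [adom, hv]⟩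

/-- Stability from connectivity at temperature 1. -/
lemma crossing_of_path {α : Assembly} {A : Set (ℤ × ℤ)} {p q : ℤ × ℤ}
    (hpath : Relation.ReflTransGen (BondAdj α) p q) (hp : p ∈ A) (hq : q ∉ A) :
    ∃ x y, BondAdj α x y ∧ x ∈ A ∧ y ∉ A := by
  induction hpath with
  | refl => exact absurd hp hq
  | tail _ hxy ih =>
    rename_i x y _
    by_cases hx : x ∈ A
    · exact ⟨x, y, hxy, hx, hq⟩
    · exact ih hx

lemma stable_of_conn {α : Assembly}
    (hconn : ∀ p ∈ adom α, ∀ q ∈ adom α, Relation.ReflTransGen (BondAdj α) p q) :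
    Stable α 1 := by
  intro A hA hne hne'
  obtain ⟨p, hp⟩ := hne
  obtain ⟨q, hq⟩ := hne'
  obtain ⟨x, y, hxy, hx, hy⟩ :=
    crossing_of_path (hconn p (hA hp) q hq.1) hp hq.2
  refine ⟨{(x, y)}, ?_, ?_⟩
  · intro e he
    rw [Finset.mem_singleton] at he
    subst he
    exact ⟨hx, (bondAdj_mem hxy).2, hy⟩
  · simp only [Finset.sum_singleton]; exact hxy

/-! ## Facing glue computations -/

lemma reflect_north (t : TileType) (r : Reflection) :
    (t.reflect r).north = if r.2 then t.south else t.north := rfl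
lemma reflect_south (t : TileType) (r : Reflection) :
    (t.reflect r).south = if r.2 then t.north else t.south := rfl
lemma reflect_east (t : TileType) (r : Reflection) :
    (t.reflect r).east = if r.1 then t.west else t.east := rfl
lemma reflect_west (t : TileType) (r : Reflection) :
    (t.reflect r).west = if r.1 then t.east else t.west := rfl

lemma facingGlue_ne_none {pl : Placement} {p q : ℤ × ℤ} (h : facingGlue pl p q ≠ none) :
    q = (p.1+1, p.2) ∨ q = (p.1-1, p.2) ∨ q = (p.1, p.2+1) ∨ q = (p.1, p.2-1) := by
  unfold facingGlue at h
  split_ifs at h <;> tauto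

lemma facingGlue_E (pl : Placement) (p : ℤ × ℤ) :
    facingGlue pl p (p.1+1, p.2) = TileType.east (pl.1.reflect pl.2) := by
  unfold facingGlue; rw [if_pos rfl]

lemma facingGlue_E' (pl : Placement) (p : ℤ × ℤ) :
    facingGlue pl (p.1+1, p.2) p = TileType.west (pl.1.reflect pl.2) := by
  unfold facingGlue
  rw [if_neg (by simp [Prod.ext_iff] <;> omega), if_pos (by simp [Prod.ext_iff])]

lemma facingGlue_W (pl : Placement) (p : ℤ × ℤ) :
    facingGlue pl p (p.1-1, p.2) = TileType.west (pl.1.reflect pl.2) := by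
  unfold facingGlue
  rw [if_neg (by simp [Prod.ext_iff] <;> omega), if_pos rfl]

lemma facingGlue_W' (pl : Placement) (p : ℤ × ℤ) :
    facingGlue pl (p.1-1, p.2) p = TileType.east (pl.1.reflect pl.2) := by
  unfold facingGlue
  rw [if_pos (by simp [Prod.ext_iff])]

lemma facingGlue_N (pl : Placement) (p : ℤ × ℤ) :
    facingGlue pl p (p.1, p.2+1) = TileType.north (pl.1.reflect pl.2) := by
  unfold facingGlue
  rw [if_neg (by simp [Prod.ext_iff] <;> omega), if_neg (by simp [Prod.ext_iff] <;> omega),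
    if_pos rfl]

lemma facingGlue_N' (pl : Placement) (p : ℤ × ℤ) :
    facingGlue pl (p.1, p.2+1) p = TileType.south (pl.1.reflect pl.2) := by
  unfold facingGlue
  rw [if_neg (by simp [Prod.ext_iff] <;> omega), if_neg (by simp [Prod.ext_iff] <;> omega),
    if_neg (by simp [Prod.ext_iff] <;> omega), if_pos (by simp [Prod.ext_iff])]

lemma facingGlue_S (pl : Placement) (p : ℤ × ℤ) :
    facingGlue pl p (p.1, p.2-1) = TileType.south (pl.1.reflect pl.2) := by
  unfold facingGlue
  rw [if_neg (by simp [Prod.ext_iff] <;> omega), if_neg (by simp [Prod.ext_iff] <;> omega),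
    if_neg (by simp [Prod.ext_iff] <;> omega), if_pos rfl]

lemma facingGlue_S' (pl : Placement) (p : ℤ × ℤ) :
    facingGlue pl (p.1, p.2-1) p = TileType.north (pl.1.reflect pl.2) := by
  unfold facingGlue
  rw [if_neg (by simp [Prod.ext_iff] <;> omega), if_neg (by simp [Prod.ext_iff] <;> omega),
    if_pos (by simp [Prod.ext_iff])]

/-! ## The intended placement predicate -/

def Pp (a b : ℕ) (p : ℤ × ℤ) (pl : Placement) : Prop :=
  (p = ((0:ℤ),(0:ℤ)) ∧ pl.1 = H0t b) ∨
  (∃ j : ℕ, 1 ≤ j ∧ j ≤ a ∧ p = ((j:ℤ), 0) ∧ pl.1 = Ht a b j ∧ pl.2.1 = false) ∨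
  (∃ j : ℕ, 1 ≤ j ∧ j ≤ a ∧ p = (-(j:ℤ), 0) ∧ pl.1 = Ht a b j ∧ pl.2.1 = true) ∨
  (∃ k : ℕ, 1 ≤ k ∧ k ≤ b ∧ p.2 = (k:ℤ) ∧ |p.1| ≤ (a:ℤ) ∧ pl.1 = Vt b k ∧
    pl.2.2 = false) ∨
  (∃ k : ℕ, 1 ≤ k ∧ k ≤ b ∧ p.2 = -(k:ℤ) ∧ |p.1| ≤ (a:ℤ) ∧ pl.1 = Vt b k ∧
    pl.2.2 = true)

/-! ## Which tiles can present a given glue on a given side -/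

lemma north_mem {a b : ℕ} {t : TileType} (ht : t ∈ tilesAB a b) (r : Reflection)
    {l : ℤ} {s : ℕ} (h : TileType.north (t.reflect r) = some (l, s)) :
    s = 1 ∧ (l = 1 ∨ ∃ k : ℕ, 1 ≤ k ∧ k ≤ b ∧ t = Vt b k ∧
        ((r.2 = false ∧ k < b ∧ l = (k:ℤ)+1) ∨ (r.2 = true ∧ l = -(k:ℤ)))) := by
  rw [reflect_north] at h
  rcases mem_tilesAB.1 ht with h0 | ⟨j, hj1, hj2, hH⟩ | ⟨k, hk1, hk2, hV⟩
  · subst h0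
    have h' : (some ((1:ℤ),(1:ℕ)) : Glue) = some (l, s) := by
      cases r.2 <;> simpa [H0t, TileType.north, TileType.south] using h
    simp only [Option.some.injEq, Prod.mk.injEq] at h'
    exact ⟨h'.2.symm, Or.inl h'.1.symm⟩
  · subst hH
    have h' : (some ((1:ℤ),(1:ℕ)) : Glue) = some (l, s) := by
      cases r.2 <;> simpa [Ht, TileType.north, TileType.south] using h
    simp only [Option.some.injEq, Prod.mk.injEq] at h'
    exact ⟨h'.2.symm, Or.inl h'.1.symm⟩
  · subst hV
    cases hr : r.2
    · rw [hr] at h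
      simp only [if_false, Bool.false_eq_true] at h
      simp only [Vt, TileType.north] at h
      split at h
      · simp only [Option.some.injEq, Prod.mk.injEq] at h
        exact ⟨h.2.symm, Or.inr ⟨k, hk1, hk2, rfl, Or.inl ⟨rfl, by assumption, h.1.symm⟩⟩⟩
      · cases h
    · rw [hr] at h
      simp only [if_true] at h
      simp only [Vt, TileType.south] at h
      simp only [Option.some.injEq, Prod.mk.injEq] at h
      exact ⟨h.2.symm, Or.inr ⟨k, hk1, hk2, rfl, Or.inr ⟨rfl, h.1.symm⟩⟩⟩

lemma south_mem {a b : ℕ} {t : TileType} (ht : t ∈ tilesAB a b) (r : Reflection)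
    {l : ℤ} {s : ℕ} (h : TileType.south (t.reflect r) = some (l, s)) :
    s = 1 ∧ (l = 1 ∨ ∃ k : ℕ, 1 ≤ k ∧ k ≤ b ∧ t = Vt b k ∧
        ((r.2 = true ∧ k < b ∧ l = (k:ℤ)+1) ∨ (r.2 = false ∧ l = -(k:ℤ)))) := by
  rw [reflect_south] at h
  rcases mem_tilesAB.1 ht with h0 | ⟨j, hj1, hj2, hH⟩ | ⟨k, hk1, hk2, hV⟩
  · subst h0
    have h' : (some ((1:ℤ),(1:ℕ)) : Glue) = some (l, s) := by
      cases r.2 <;> simpa [H0t, TileType.north, TileType.south] using h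
    simp only [Option.some.injEq, Prod.mk.injEq] at h'
    exact ⟨h'.2.symm, Or.inl h'.1.symm⟩
  · subst hH
    have h' : (some ((1:ℤ),(1:ℕ)) : Glue) = some (l, s) := by
      cases r.2 <;> simpa [Ht, TileType.north, TileType.south] using h
    simp only [Option.some.injEq, Prod.mk.injEq] at h'
    exact ⟨h'.2.symm, Or.inl h'.1.symm⟩
  · subst hV
    cases hr : r.2
    · rw [hr] at h
      simp only [if_false, Bool.false_eq_true] at h
      simp only [Vt, TileType.south] at h
      simp only [Option.some.injEq, Prod.mk.injEq] at h
      exact ⟨h.2.symm, Or.inr ⟨k, hk1, hk2, rfl, Or.inr ⟨rfl, h.1.symm⟩⟩⟩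
    · rw [hr] at h
      simp only [if_true] at h
      simp only [Vt, TileType.north] at h
      split at h
      · simp only [Option.some.injEq, Prod.mk.injEq] at h
        exact ⟨h.2.symm, Or.inr ⟨k, hk1, hk2, rfl, Or.inl ⟨rfl, by assumption, h.1.symm⟩⟩⟩
      · cases h

lemma east_mem {a b : ℕ} {t : TileType} (ht : t ∈ tilesAB a b) (r : Reflection)
    {l : ℤ} {s : ℕ} (h : TileType.east (t.reflect r) = some (l, s)) :
    s = 1 ∧ ((l = (b:ℤ)+1 ∧ t = H0t b) ∨ ∃ j : ℕ, 1 ≤ j ∧ j ≤ a ∧ t = Ht a b j ∧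
        ((r.1 = false ∧ j < a ∧ l = (b:ℤ)+(j:ℤ)+1) ∨ (r.1 = true ∧ l = -((b:ℤ)+(j:ℤ))))) := by
  rw [reflect_east] at h
  rcases mem_tilesAB.1 ht with h0 | ⟨j, hj1, hj2, hH⟩ | ⟨k, hk1, hk2, hV⟩
  · subst h0
    have h' : (some ((b:ℤ)+1,(1:ℕ)) : Glue) = some (l, s) := by
      cases r.1 <;> simpa [H0t, TileType.east, TileType.west] using h
    simp only [Option.some.injEq, Prod.mk.injEq] at h'
    exact ⟨h'.2.symm, Or.inl ⟨h'.1.symm, rfl⟩⟩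
  · subst hH
    cases hr : r.1
    · rw [hr] at h
      simp only [if_false, Bool.false_eq_true] at h
      simp only [Ht, TileType.east] at h
      split at h
      · simp only [Option.some.injEq, Prod.mk.injEq] at h
        exact ⟨h.2.symm, Or.inr ⟨j, hj1, hj2, rfl, Or.inl ⟨rfl, by assumption, h.1.symm⟩⟩⟩
      · cases h
    · rw [hr] at h
      simp only [if_true] at h
      simp only [Ht, TileType.west] at h
      simp only [Option.some.injEq, Prod.mk.injEq] at h
      exact ⟨h.2.symm, Or.inr ⟨j, hj1, hj2, rfl, Or.inr ⟨rfl, h.1.symm⟩⟩⟩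
  · subst hV
    exfalso
    cases hr : r.1 <;> rw [hr] at h <;>
      simp [Vt, TileType.east, TileType.west] at h

lemma west_mem {a b : ℕ} {t : TileType} (ht : t ∈ tilesAB a b) (r : Reflection)
    {l : ℤ} {s : ℕ} (h : TileType.west (t.reflect r) = some (l, s)) :
    s = 1 ∧ ((l = (b:ℤ)+1 ∧ t = H0t b) ∨ ∃ j : ℕ, 1 ≤ j ∧ j ≤ a ∧ t = Ht a b j ∧
        ((r.1 = true ∧ j < a ∧ l = (b:ℤ)+(j:ℤ)+1) ∨ (r.1 = false ∧ l = -((b:ℤ)+(j:ℤ))))) := by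
  rw [reflect_west] at h
  rcases mem_tilesAB.1 ht with h0 | ⟨j, hj1, hj2, hH⟩ | ⟨k, hk1, hk2, hV⟩
  · subst h0
    have h' : (some ((b:ℤ)+1,(1:ℕ)) : Glue) = some (l, s) := by
      cases r.1 <;> simpa [H0t, TileType.east, TileType.west] using h
    simp only [Option.some.injEq, Prod.mk.injEq] at h'
    exact ⟨h'.2.symm, Or.inl ⟨h'.1.symm, rfl⟩⟩
  · subst hH
    cases hr : r.1
    · rw [hr] at h
      simp only [if_false, Bool.false_eq_true] at h
      simp only [Ht, TileType.west] at h
      simp only [Option.some.injEq, Prod.mk.injEq] at h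
      exact ⟨h.2.symm, Or.inr ⟨j, hj1, hj2, rfl, Or.inr ⟨rfl, h.1.symm⟩⟩⟩
    · rw [hr] at h
      simp only [if_true] at h
      simp only [Ht, TileType.east] at h
      split at h
      · simp only [Option.some.injEq, Prod.mk.injEq] at h
        exact ⟨h.2.symm, Or.inr ⟨j, hj1, hj2, rfl, Or.inl ⟨rfl, by assumption, h.1.symm⟩⟩⟩
      · cases h
  · subst hV
    exfalso
    cases hr : r.1 <;> rw [hr] at h <;>
      simp [Vt, TileType.east, TileType.west] at h

/-! ## Side values of placed tiles -/

lemma H0_sides (b : ℕ) (r : Reflection) :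
    ((H0t b).reflect r).north = some (1,1) ∧ ((H0t b).reflect r).south = some (1,1) ∧
    ((H0t b).reflect r).east = some ((b:ℤ)+1,1) ∧
    ((H0t b).reflect r).west = some ((b:ℤ)+1,1) := by
  rcases r with ⟨r1, r2⟩
  cases r1 <;> cases r2 <;>
    simp [H0t, TileType.reflect, TileType.north, TileType.south, TileType.east,
      TileType.west]

lemma Ht_NS (a b j : ℕ) (r : Reflection) :
    ((Ht a b j).reflect r).north = some (1,1) ∧ ((Ht a b j).reflect r).south = some (1,1) := by
  rcases r with ⟨r1, r2⟩
  cases r1 <;> cases r2 <;>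
    simp [Ht, TileType.reflect, TileType.north, TileType.south]

lemma Ht_E_false (a b j : ℕ) (r : Reflection) (hr : r.1 = false) :
    ((Ht a b j).reflect r).east = (if j < a then some ((b:ℤ)+(j:ℤ)+1,1) else none) ∧
    ((Ht a b j).reflect r).west = some (-((b:ℤ)+(j:ℤ)),1) := by
  rcases r with ⟨r1, r2⟩
  cases r2 <;> simp_all [Ht, TileType.reflect, TileType.east, TileType.west]

lemma Ht_E_true (a b j : ℕ) (r : Reflection) (hr : r.1 = true) :
    ((Ht a b j).reflect r).east = some (-((b:ℤ)+(j:ℤ)),1) ∧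
    ((Ht a b j).reflect r).west = (if j < a then some ((b:ℤ)+(j:ℤ)+1,1) else none) := by
  rcases r with ⟨r1, r2⟩
  cases r2 <;> simp_all [Ht, TileType.reflect, TileType.east, TileType.west]

lemma Vt_EW (b k : ℕ) (r : Reflection) :
    ((Vt b k).reflect r).east = none ∧ ((Vt b k).reflect r).west = none := by
  rcases r with ⟨r1, r2⟩
  cases r1 <;> cases r2 <;> simp [Vt, TileType.reflect, TileType.east, TileType.west]

lemma Vt_NS_false (b k : ℕ) (r : Reflection) (hr : r.2 = false) :
    ((Vt b k).reflect r).north = (if k < b then some ((k:ℤ)+1,1) else none) ∧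
    ((Vt b k).reflect r).south = some (-(k:ℤ),1) := by
  rcases r with ⟨r1, r2⟩
  cases r1 <;> simp_all [Vt, TileType.reflect, TileType.north, TileType.south]

lemma Vt_NS_true (b k : ℕ) (r : Reflection) (hr : r.2 = true) :
    ((Vt b k).reflect r).north = some (-(k:ℤ),1) ∧
    ((Vt b k).reflect r).south = (if k < b then some ((k:ℤ)+1,1) else none) := by
  rcases r with ⟨r1, r2⟩
  cases r1 <;> simp_all [Vt, TileType.reflect, TileType.north, TileType.south]

/-! ## Comb-closure -/

def Comb (α : Assembly) : Prop := ∀ x y : ℤ, α (x, y) ≠ none →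
  (0 < y → α (x, y-1) ≠ none) ∧ (y < 0 → α (x, y+1) ≠ none) ∧
  (y = 0 → 0 < x → α (x-1, 0) ≠ none) ∧ (y = 0 → x < 0 → α (x+1, 0) ≠ none)

/-- Payload: the inward neighbour of `p` is occupied. -/
def Inward (α : Assembly) (p : ℤ × ℤ) : Prop :=
  (0 < p.2 → α (p.1, p.2-1) ≠ none) ∧ (p.2 < 0 → α (p.1, p.2+1) ≠ none) ∧
  (p.2 = 0 → 0 < p.1 → α (p.1-1, 0) ≠ none) ∧ (p.2 = 0 → p.1 < 0 → α (p.1+1, 0) ≠ none)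

/-! ## The bond analysis -/

lemma bond_analysis {a b : ℕ} {α : Assembly}
    (hP : ∀ p pl, α p = some pl → Pp a b p pl) (hC : Comb α)
    {p : ℤ × ℤ} (hp : α p = none) {t : TileType} (ht : t ∈ tilesAB a b) {r : Reflection}
    {q : ℤ × ℤ} {u : Placement} (hq : α q = some u)
    (hbond : 0 < glueBind (facingGlue (t, r) p q) (facingGlue u q p)) :
    Pp a b p (t, r) ∧ Inward α p := by
  obtain ⟨l, s, hg, hh, hs⟩ := glueBind_pos hbond
  have hqne : α (q.1, q.2) ≠ none := by rw [Prod.mk.eta]; simp [hq]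
  have hcomb := hC q.1 q.2 hqne
  have hdir : p = (q.1+1, q.2) ∨ p = (q.1-1, q.2) ∨ p = (q.1, q.2+1) ∨ p = (q.1, q.2-1) :=
    facingGlue_ne_none (by rw [hh]; simp)
  have hPq := hP q u hq
  rcases hdir with hd | hd | hd | hd
  · -- p east of q : new tile presents its west side
    rw [hd, facingGlue_E'] at hg
    rw [hd, facingGlue_E] at hh
    have hg' := west_mem ht r hg
    rcases hPq with ⟨hqq, hu1⟩ | ⟨j, hj1, hj2, hqq, hu1, hur⟩ | ⟨j, hj1, hj2, hqq, hu1, hur⟩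
      | ⟨k, hk1, hk2, hq2, hq1, hu1, hur⟩ | ⟨k, hk1, hk2, hq2, hq1, hu1, hur⟩
    · -- q is the seed
      rw [hu1, (H0_sides b u.2).2.2.1] at hh
      simp only [Option.some.injEq, Prod.mk.injEq] at hh
      have hq1 : q.1 = 0 := by rw [hqq]
      have hq2 : q.2 = 0 := by rw [hqq]
      rcases hg'.2 with ⟨hlb, -⟩ | ⟨j, hj1, hj2, hteq, ⟨-, -, hlv⟩ | ⟨hr1, hlv⟩⟩
      · omega
      · omega
      · have hj : j = 1 := by omega
        subst hj
        refine ⟨Or.inr (Or.inl ⟨1, le_refl 1, hj2, ?_, hteq, hr1⟩), ?_, ?_, ?_, ?_⟩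
        · rw [hd]; simp [Prod.ext_iff]; omega
        · rw [hd]; simp only []; intro h; omega
        · rw [hd]; simp only []; intro h; omega
        · rw [hd]; intro _ _
          have : (q.1 + 1 - 1, (0:ℤ)) = q := by rw [Prod.ext_iff]; constructor <;> simp <;> omega
          rw [this]; simp [hq]
        · rw [hd]; simp only []; intro _ h; omega
    · -- q is on the row, east side
      rw [hu1, (Ht_E_false a b j u.2 hur).1] at hh
      split at hh
      · simp only [Option.some.injEq, Prod.mk.injEq] at hh
        have hq1 : q.1 = (j:ℤ) := by rw [hqq]
        have hq2 : q.2 = 0 := by rw [hqq]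
        rcases hg'.2 with ⟨hlb, -⟩ | ⟨j', hj1', hj2', hteq, ⟨-, -, hlv⟩ | ⟨hr1, hlv⟩⟩
        · omega
        · omega
        · have hj : j' = j + 1 := by omega
          subst hj
          refine ⟨Or.inr (Or.inl ⟨j+1, by omega, hj2', ?_, hteq, hr1⟩), ?_, ?_, ?_, ?_⟩
          · rw [hd]; simp [Prod.ext_iff]; push_cast; omega
          · rw [hd]; simp only []; intro h; omega
          · rw [hd]; simp only []; intro h; omega
          · rw [hd]; intro _ _
            have : (q.1 + 1 - 1, (0:ℤ)) = q := by
              rw [Prod.ext_iff]; constructor <;> simp <;> omega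
            rw [this]; simp [hq]
          · rw [hd]; simp only []; intro _ h; omega
      · exact absurd hh (by simp)
    · -- q is on the row, west side: comb kill
      exfalso
      have hq1 : q.1 = -(j:ℤ) := by rw [hqq]
      have hq2 : q.2 = 0 := by rw [hqq]
      have := hcomb.2.2.2 hq2 (by omega)
      rw [← hq2] at this
      rw [hd] at hp
      exact this hp
    · -- q is a column tile
      rw [hu1, (Vt_EW b k u.2).1] at hh
      exact absurd hh (by simp)
    · rw [hu1, (Vt_EW b k u.2).1] at hh
      exact absurd hh (by simp)
  · -- p west of q : new tile presents its east side
    rw [hd, facingGlue_W'] at hg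
    rw [hd, facingGlue_W] at hh
    have hg' := east_mem ht r hg
    rcases hPq with ⟨hqq, hu1⟩ | ⟨j, hj1, hj2, hqq, hu1, hur⟩ | ⟨j, hj1, hj2, hqq, hu1, hur⟩
      | ⟨k, hk1, hk2, hq2, hq1, hu1, hur⟩ | ⟨k, hk1, hk2, hq2, hq1, hu1, hur⟩
    · -- seed : grow west
      rw [hu1, (H0_sides b u.2).2.2.2] at hh
      simp only [Option.some.injEq, Prod.mk.injEq] at hh
      have hq1 : q.1 = 0 := by rw [hqq]
      have hq2 : q.2 = 0 := by rw [hqq]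
      rcases hg'.2 with ⟨hlb, -⟩ | ⟨j, hj1, hj2, hteq, ⟨-, -, hlv⟩ | ⟨hr1, hlv⟩⟩
      · omega
      · omega
      · have hj : j = 1 := by omega
        subst hj
        refine ⟨Or.inr (Or.inr (Or.inl ⟨1, le_refl 1, hj2, ?_, hteq, hr1⟩)), ?_, ?_, ?_, ?_⟩
        · rw [hd]; simp [Prod.ext_iff]; omega
        · rw [hd]; simp only []; intro h; omega
        · rw [hd]; simp only []; intro h; omega
        · rw [hd]; simp only []; intro _ h; omega
        · rw [hd]; intro _ _
          have : (q.1 - 1 + 1, (0:ℤ)) = q := by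
            rw [Prod.ext_iff]; constructor <;> simp <;> omega
          rw [this]; simp [hq]
    · -- q on the row east side : comb kill
      exfalso
      have hq1 : q.1 = (j:ℤ) := by rw [hqq]
      have hq2 : q.2 = 0 := by rw [hqq]
      have := hcomb.2.2.1 hq2 (by omega)
      rw [← hq2] at this
      rw [hd] at hp
      exact this hp
    · -- q on the row west side : grow west
      rw [hu1, (Ht_E_true a b j u.2 hur).2] at hh
      split at hh
      · simp only [Option.some.injEq, Prod.mk.injEq] at hh
        have hq1 : q.1 = -(j:ℤ) := by rw [hqq]
        have hq2 : q.2 = 0 := by rw [hqq]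
        rcases hg'.2 with ⟨hlb, -⟩ | ⟨j', hj1', hj2', hteq, ⟨-, -, hlv⟩ | ⟨hr1, hlv⟩⟩
        · omega
        · omega
        · have hj : j' = j + 1 := by omega
          subst hj
          refine ⟨Or.inr (Or.inr (Or.inl ⟨j+1, by omega, hj2', ?_, hteq, hr1⟩)), ?_, ?_, ?_, ?_⟩
          · rw [hd]; simp [Prod.ext_iff]; push_cast; omega
          · rw [hd]; simp only []; intro h; omega
          · rw [hd]; simp only []; intro h; omega
          · rw [hd]; simp only []; intro _ h; omega
          · rw [hd]; intro _ _
            have : (q.1 - 1 + 1, (0:ℤ)) = q := by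
              rw [Prod.ext_iff]; constructor <;> simp <;> omega
            rw [this]; simp [hq]
      · exact absurd hh (by simp)
    · rw [hu1, (Vt_EW b k u.2).2] at hh
      exact absurd hh (by simp)
    · rw [hu1, (Vt_EW b k u.2).2] at hh
      exact absurd hh (by simp)
  · -- p north of q : new tile presents its south side
    rw [hd, facingGlue_N'] at hg
    rw [hd, facingGlue_N] at hh
    have hg' := south_mem ht r hg
    rcases hPq with ⟨hqq, hu1⟩ | ⟨j, hj1, hj2, hqq, hu1, hur⟩ | ⟨j, hj1, hj2, hqq, hu1, hur⟩
      | ⟨k, hk1, hk2, hq2, hq1, hu1, hur⟩ | ⟨k, hk1, hk2, hq2, hq1, hu1, hur⟩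
    · -- seed: start column up
      rw [hu1, (H0_sides b u.2).1] at hh
      simp only [Option.some.injEq, Prod.mk.injEq] at hh
      have hq1 : q.1 = 0 := by rw [hqq]
      have hq2 : q.2 = 0 := by rw [hqq]
      rcases hg'.2 with hl1 | ⟨k, hk1, hk2, hteq, ⟨-, -, hlv⟩ | ⟨hr2, hlv⟩⟩
      · omega
      · omega
      · have hk : k = 1 := by omega
        subst hk
        refine ⟨Or.inr (Or.inr (Or.inr (Or.inl ⟨1, le_refl 1, hk2, ?_, ?_, hteq, hr2⟩))),
          ?_, ?_, ?_, ?_⟩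
        · rw [hd]; simp [abs_le]; omega
        · rw [hd]; simp [abs_le]; omega
        · rw [hd]; intro _
          have : (q.1, q.2 + 1 - 1) = q := by
            rw [Prod.ext_iff]; constructor <;> simp
          rw [this]; simp [hq]
        · rw [hd]; simp only []; intro h; omega
        · rw [hd]; simp only []; intro h _; omega
        · rw [hd]; simp only []; intro h _; omega
    · -- q on row : start column up
      rw [hu1, (Ht_NS a b j u.2).1] at hh
      simp only [Option.some.injEq, Prod.mk.injEq] at hh
      have hq1 : q.1 = (j:ℤ) := by rw [hqq]
      have hq2 : q.2 = 0 := by rw [hqq]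
      rcases hg'.2 with hl1 | ⟨k, hk1, hk2, hteq, ⟨-, -, hlv⟩ | ⟨hr2, hlv⟩⟩
      · omega
      · omega
      · have hk : k = 1 := by omega
        subst hk
        refine ⟨Or.inr (Or.inr (Or.inr (Or.inl ⟨1, le_refl 1, hk2, ?_, ?_, hteq, hr2⟩))),
          ?_, ?_, ?_, ?_⟩
        · rw [hd]; simp [abs_le]; omega
        · rw [hd]; simp [abs_le]; omega
        · rw [hd]; intro _
          have : (q.1, q.2 + 1 - 1) = q := by
            rw [Prod.ext_iff]; constructor <;> simp
          rw [this]; simp [hq]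
        · rw [hd]; simp only []; intro h; omega
        · rw [hd]; simp only []; intro h _; omega
        · rw [hd]; simp only []; intro h _; omega
    · -- q on row west : start column up
      rw [hu1, (Ht_NS a b j u.2).1] at hh
      simp only [Option.some.injEq, Prod.mk.injEq] at hh
      have hq1 : q.1 = -(j:ℤ) := by rw [hqq]
      have hq2 : q.2 = 0 := by rw [hqq]
      rcases hg'.2 with hl1 | ⟨k, hk1, hk2, hteq, ⟨-, -, hlv⟩ | ⟨hr2, hlv⟩⟩
      · omega
      · omega
      · have hk : k = 1 := by omega
        subst hk
        refine ⟨Or.inr (Or.inr (Or.inr (Or.inl ⟨1, le_refl 1, hk2, ?_, ?_, hteq, hr2⟩))),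
          ?_, ?_, ?_, ?_⟩
        · rw [hd]; simp [abs_le]; omega
        · rw [hd]; simp [abs_le]; omega
        · rw [hd]; intro _
          have : (q.1, q.2 + 1 - 1) = q := by
            rw [Prod.ext_iff]; constructor <;> simp
          rw [this]; simp [hq]
        · rw [hd]; simp only []; intro h; omega
        · rw [hd]; simp only []; intro h _; omega
        · rw [hd]; simp only []; intro h _; omega
    · -- q in upper column : extend up
      rw [hu1, (Vt_NS_false b k u.2 hur).1] at hh
      split at hh
      · simp only [Option.some.injEq, Prod.mk.injEq] at hh
        rcases hg'.2 with hl1 | ⟨k', hk1', hk2', hteq, ⟨-, -, hlv⟩ | ⟨hr2, hlv⟩⟩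
        · omega
        · omega
        · have hk : k' = k + 1 := by omega
          subst hk
          refine ⟨Or.inr (Or.inr (Or.inr (Or.inl ⟨k+1, by omega, hk2', ?_, ?_, hteq, hr2⟩))),
            ?_, ?_, ?_, ?_⟩
          · rw [hd]; simp [abs_le]; push_cast; omega
          · rw [hd]; simp only []; rw [abs_le] at hq1 ⊢; omega
          · rw [hd]; intro _
            have : (q.1, q.2 + 1 - 1) = q := by
              rw [Prod.ext_iff]; constructor <;> simp
            rw [this]; simp [hq]
          · rw [hd]; simp only []; intro h; omega
          · rw [hd]; simp only []; intro h _; omega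
          · rw [hd]; simp only []; intro h _; omega
      · exact absurd hh (by simp)
    · -- q in lower column : comb kill
      exfalso
      have := hcomb.2.1 (by omega)
      rw [hd] at hp
      exact this hp
  · -- p south of q : new tile presents its north side
    rw [hd, facingGlue_S'] at hg
    rw [hd, facingGlue_S] at hh
    have hg' := north_mem ht r hg
    rcases hPq with ⟨hqq, hu1⟩ | ⟨j, hj1, hj2, hqq, hu1, hur⟩ | ⟨j, hj1, hj2, hqq, hu1, hur⟩
      | ⟨k, hk1, hk2, hq2, hq1, hu1, hur⟩ | ⟨k, hk1, hk2, hq2, hq1, hu1, hur⟩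
    · -- seed : start column down
      rw [hu1, (H0_sides b u.2).2.1] at hh
      simp only [Option.some.injEq, Prod.mk.injEq] at hh
      have hq1 : q.1 = 0 := by rw [hqq]
      have hq2 : q.2 = 0 := by rw [hqq]
      rcases hg'.2 with hl1 | ⟨k, hk1, hk2, hteq, ⟨-, -, hlv⟩ | ⟨hr2, hlv⟩⟩
      · omega
      · omega
      · have hk : k = 1 := by omega
        subst hk
        refine ⟨Or.inr (Or.inr (Or.inr (Or.inr ⟨1, le_refl 1, hk2, ?_, ?_, hteq, hr2⟩))),
          ?_, ?_, ?_, ?_⟩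
        · rw [hd]; simp [abs_le]; omega
        · rw [hd]; simp [abs_le]; omega
        · rw [hd]; simp only []; intro h; omega
        · rw [hd]; intro _
          have : (q.1, q.2 - 1 + 1) = q := by
            rw [Prod.ext_iff]; constructor <;> simp
          rw [this]; simp [hq]
        · rw [hd]; simp only []; intro h _; omega
        · rw [hd]; simp only []; intro h _; omega
    · -- q on row : start column down
      rw [hu1, (Ht_NS a b j u.2).2] at hh
      simp only [Option.some.injEq, Prod.mk.injEq] at hh
      have hq1 : q.1 = (j:ℤ) := by rw [hqq]
      have hq2 : q.2 = 0 := by rw [hqq]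
      rcases hg'.2 with hl1 | ⟨k, hk1, hk2, hteq, ⟨-, -, hlv⟩ | ⟨hr2, hlv⟩⟩
      · omega
      · omega
      · have hk : k = 1 := by omega
        subst hk
        refine ⟨Or.inr (Or.inr (Or.inr (Or.inr ⟨1, le_refl 1, hk2, ?_, ?_, hteq, hr2⟩))),
          ?_, ?_, ?_, ?_⟩
        · rw [hd]; simp [abs_le]; omega
        · rw [hd]; simp [abs_le]; omega
        · rw [hd]; simp only []; intro h; omega
        · rw [hd]; intro _
          have : (q.1, q.2 - 1 + 1) = q := by
            rw [Prod.ext_iff]; constructor <;> simp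
          rw [this]; simp [hq]
        · rw [hd]; simp only []; intro h _; omega
        · rw [hd]; simp only []; intro h _; omega
    · -- q on row west : start column down
      rw [hu1, (Ht_NS a b j u.2).2] at hh
      simp only [Option.some.injEq, Prod.mk.injEq] at hh
      have hq1 : q.1 = -(j:ℤ) := by rw [hqq]
      have hq2 : q.2 = 0 := by rw [hqq]
      rcases hg'.2 with hl1 | ⟨k, hk1, hk2, hteq, ⟨-, -, hlv⟩ | ⟨hr2, hlv⟩⟩
      · omega
      · omega
      · have hk : k = 1 := by omega
        subst hk
        refine ⟨Or.inr (Or.inr (Or.inr (Or.inr ⟨1, le_refl 1, hk2, ?_, ?_, hteq, hr2⟩))),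
          ?_, ?_, ?_, ?_⟩
        · rw [hd]; simp [abs_le]; omega
        · rw [hd]; simp [abs_le]; omega
        · rw [hd]; simp only []; intro h; omega
        · rw [hd]; intro _
          have : (q.1, q.2 - 1 + 1) = q := by
            rw [Prod.ext_iff]; constructor <;> simp
          rw [this]; simp [hq]
        · rw [hd]; simp only []; intro h _; omega
        · rw [hd]; simp only []; intro h _; omega
    · -- q in upper column : comb kill
      exfalso
      have := hcomb.1 (by omega)
      rw [hd] at hp
      exact this hp
    · -- q in lower column : extend down
      rw [hu1, (Vt_NS_true b k u.2 hur).2] at hh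
      split at hh
      · simp only [Option.some.injEq, Prod.mk.injEq] at hh
        rcases hg'.2 with hl1 | ⟨k', hk1', hk2', hteq, ⟨-, -, hlv⟩ | ⟨hr2, hlv⟩⟩
        · omega
        · omega
        · have hk : k' = k + 1 := by omega
          subst hk
          refine ⟨Or.inr (Or.inr (Or.inr (Or.inr ⟨k+1, by omega, hk2', ?_, ?_, hteq, hr2⟩))),
            ?_, ?_, ?_, ?_⟩
          · rw [hd]; simp [abs_le]; push_cast; omega
          · rw [hd]; simp only []; rw [abs_le] at hq1 ⊢; omega
          · rw [hd]; simp only []; intro h; omega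
          · rw [hd]; intro _
            have : (q.1, q.2 - 1 + 1) = q := by
              rw [Prod.ext_iff]; constructor <;> simp
            rw [this]; simp [hq]
          · rw [hd]; simp only []; intro h _; omega
          · rw [hd]; simp only []; intro h _; omega
      · exact absurd hh (by simp)

/-! ## The invariant -/

structure InvS (a b : ℕ) (α : Assembly) : Prop where
  orig : α ((0:ℤ),(0:ℤ)) ≠ none
  prop : ∀ p pl, α p = some pl → Pp a b p pl
  comb : Comb α
  conn : ∀ p ∈ adom α, Relation.ReflTransGen (BondAdj α) ((0:ℤ),(0:ℤ)) p

lemma inv_seed (a b : ℕ) : InvS a b (seedA b) := by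
  refine ⟨by simp [seedA], ?_, ?_, ?_⟩
  · intro p pl h
    simp only [seedA] at h
    split at h
    · cases h
      exact Or.inl ⟨by assumption, rfl⟩
    · cases h
  · intro x y hxy
    simp only [seedA] at hxy
    split at hxy
    · rename_i hxy0
      rw [Prod.mk.injEq] at hxy0
      refine ⟨by omega, by omega, by intro _ h; omega, by intro _ h; omega⟩
    · simp at hxy
  · intro p hp
    simp only [adom, seedA, Set.mem_setOf_eq] at hp
    split at hp
    · rename_i h; rw [h]
    · simp at hp

lemma update_pres_some {α : Assembly} {p : ℤ × ℤ} {v : Placement} {z : ℤ × ℤ}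
    (hz : α z ≠ none) : Function.update α p (some v) z ≠ none := by
  by_cases h : z = p
  · subst h; simp
  · rwa [Function.update_of_ne h]

lemma bond_lift {α : Assembly} {p : ℤ × ℤ} {v : Placement} {x y : ℤ × ℤ}
    (hxy : BondAdj α x y) (hp : α p = none) :
    BondAdj (Function.update α p (some v)) x y := by
  obtain ⟨u1, u2, hx, hy, hb⟩ := bondStrength_pos hxy
  have hxp : x ≠ p := fun h => by subst h; rw [hp] at hx; cases hx
  have hyp : y ≠ p := fun h => by subst h; rw [hp] at hy; cases hy
  unfold BondAdj bondStrength
  rw [Function.update_of_ne hxp, Function.update_of_ne hyp, hx, hy]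
  exact hb

lemma inv_attach {a b : ℕ} {α β : Assembly} (hI : InvS a b α)
    (hA : Attaches (sysAB a b) α β) : InvS a b β := by
  obtain ⟨p, t, r, hp, ht, hβ, hstab⟩ := hA
  have ht' : t ∈ tilesAB a b := ht
  have hop : ((0:ℤ),(0:ℤ)) ≠ p := fun h => hI.orig (h ▸ hp)
  have hβp : β p = some (t, r) := by rw [hβ]; simp
  have hβne : ∀ z, z ≠ p → β z = α z := by intro z hz; rw [hβ, Function.update_of_ne hz]
  -- extract the bond of the new tile
  obtain ⟨E, hE, hsum⟩ := hstab {p} (by simp [adom, hβp])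
    ⟨p, rfl⟩ ⟨((0:ℤ),(0:ℤ)), ⟨(by
      simp only [adom, Set.mem_setOf_eq]
      rw [hβne _ hop]; exact hI.orig), by simpa using hop⟩⟩
  have hex : ∃ e ∈ E, 0 < bondStrength β e.1 e.2 := by
    by_contra hcon
    push_neg at hcon
    have : ∑ e ∈ E, bondStrength β e.1 e.2 = 0 :=
      Finset.sum_eq_zero fun e he => by have := hcon e he; omega
    rw [this] at hsum
    exact absurd hsum (by simp [sysAB])
  obtain ⟨e, heE, hepos⟩ := hex
  obtain ⟨he1, he2⟩ := hE e heE
  rw [Set.mem_singleton_iff] at he1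
  have he2p : e.2 ≠ p := fun h => he2.2 (by rw [Set.mem_singleton_iff, h])
  have hαe2 : α e.2 ≠ none := by
    have := he2.1
    simp only [adom, Set.mem_setOf_eq] at this
    rwa [hβne _ he2p] at this
  obtain ⟨u, hu⟩ := Option.ne_none_iff_exists'.1 hαe2
  rw [he1] at hepos
  have hbond : 0 < glueBind (facingGlue (t, r) p e.2) (facingGlue u e.2 p) := by
    have h' : bondStrength β p e.2 =
        glueBind (facingGlue (t, r) p e.2) (facingGlue u e.2 p) := by
      unfold bondStrength
      rw [hβp, hβne _ he2p, hu]
    rwa [h'] at hepos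
  obtain ⟨hPp, hIn⟩ := bond_analysis hI.prop hI.comb hp ht' hu hbond
  have hBpq : BondAdj β p e.2 := by
    unfold BondAdj bondStrength
    rw [hβp, hβne _ he2p, hu]
    exact hbond
  refine ⟨by rw [hβne _ hop]; exact hI.orig, ?_, ?_, ?_⟩
  · intro x pl hx
    by_cases hxp : x = p
    · subst hxp
      rw [hβp] at hx
      cases hx
      exact hPp
    · rw [hβne _ hxp] at hx
      exact hI.prop x pl hx
  · intro x y hxy
    by_cases hxp : (x, y) = p
    · subst hxp
      obtain ⟨h1, h2, h3, h4⟩ := hIn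
      rw [hβ]
      exact ⟨fun h => update_pres_some (h1 h), fun h => update_pres_some (h2 h),
        fun h h' => update_pres_some (h3 h h'), fun h h' => update_pres_some (h4 h h')⟩
    · rw [hβne _ hxp] at hxy
      obtain ⟨h1, h2, h3, h4⟩ := hI.comb x y hxy
      rw [hβ]
      exact ⟨fun h => update_pres_some (h1 h), fun h => update_pres_some (h2 h),
        fun h h' => update_pres_some (h3 h h'), fun h h' => update_pres_some (h4 h h')⟩
  · intro x hx
    by_cases hxp : x = p
    · subst hxp
      have hpath : Relation.ReflTransGen (BondAdj β) ((0:ℤ),(0:ℤ)) e.2 := by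
        have h := hI.conn e.2 (by simpa [adom] using hαe2)
        refine Relation.ReflTransGen.mono (fun u v huv => ?_) _ _ h
        rw [hβ]; exact bond_lift huv hp
      exact hpath.tail (bondAdj_symm hBpq)
    · have hx' : x ∈ adom α := by
        simp only [adom, Set.mem_setOf_eq] at hx ⊢
        rwa [hβne _ hxp] at hx
      refine Relation.ReflTransGen.mono (fun u v huv => ?_) _ _ (hI.conn x hx')
      rw [hβ]
      exact bond_lift huv hp

/-! ## Producible assemblies satisfy the invariant -/

lemma chain_mono {a b : ℕ} {f : ℕ → Assembly}
    (hstep : ∀ n, f (n + 1) = f n ∨ Attaches (sysAB a b) (f n) (f (n + 1)))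
    {n n' : ℕ} (h : n ≤ n') {p : ℤ × ℤ} {pl : Placement} (hf : f n p = some pl) :
    f n' p = some pl := by
  induction n', h using Nat.le_induction with
  | base => exact hf
  | succ n' hle ih =>
    rcases hstep n' with he | ⟨p0, t, r, hp0, -, hβ, -⟩
    · rwa [he]
    · rw [hβ]
      have : p ≠ p0 := fun h => by rw [h, hp0] at ih; cases ih
      rwa [Function.update_of_ne this]

lemma producible_inv {a b : ℕ} {α : Assembly}
    (hprod : Producible (sysAB a b) α) : InvS a b α := by
  obtain ⟨f, hf0, hstep, hiff⟩ := hprod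
  have hInv : ∀ n, InvS a b (f n) := by
    intro n
    induction n with
    | zero => rw [hf0]; exact inv_seed a b
    | succ n ih =>
      rcases hstep n with he | hA
      · rwa [he]
      · exact inv_attach ih hA
  have hsome : ∀ n p pl, f n p = some pl → α p = some pl := fun n p pl h =>
    (hiff p pl).2 ⟨n, h⟩
  have hacc : ∀ p, α p ≠ none → ∃ n, f n p = α p := by
    intro p hne
    obtain ⟨pl, hpl⟩ := Option.ne_none_iff_exists'.1 hne
    obtain ⟨n, hn⟩ := (hiff p pl).1 hpl
    exact ⟨n, by rw [hn, hpl]⟩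
  refine ⟨?_, ?_, ?_, ?_⟩
  · have h0 : f 0 ((0:ℤ),(0:ℤ)) = some (H0t b, (false, false)) := by
      rw [hf0]; simp [sysAB, seedA]
    rw [hsome 0 _ _ h0]
    simp
  · intro p pl hp
    obtain ⟨n, hn⟩ := (hiff p pl).1 hp
    exact (hInv n).prop p pl hn
  · intro x y hxy
    obtain ⟨n, hn⟩ := hacc (x, y) hxy
    have hfn : f n (x, y) ≠ none := by rw [hn]; exact hxy
    obtain ⟨h1, h2, h3, h4⟩ := (hInv n).comb x y hfn
    have lift : ∀ z : ℤ × ℤ, f n z ≠ none → α z ≠ none := by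
      intro z hz
      obtain ⟨pl, hpl⟩ := Option.ne_none_iff_exists'.1 hz
      rw [hsome n z pl hpl]
      simp
    exact ⟨fun h => lift _ (h1 h), fun h => lift _ (h2 h),
      fun h h' => lift _ (h3 h h'), fun h h' => lift _ (h4 h h')⟩
  · intro p hp
    simp only [adom, Set.mem_setOf_eq] at hp
    obtain ⟨n, hn⟩ := hacc p hp
    have hfn : p ∈ adom (f n) := by simp only [adom, Set.mem_setOf_eq]; rw [hn]; exact hp
    refine Relation.ReflTransGen.mono (fun u v huv => ?_) _ _ ((hInv n).conn p hfn)
    obtain ⟨u1, u2, hu1, hu2, hb⟩ := bondStrength_pos huv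
    unfold BondAdj bondStrength
    rw [hsome n _ _ hu1, hsome n _ _ hu2]
    exact hb

/-! ## Glue presented towards the next empty position -/

lemma row_east_glue {a b : ℕ} {α : Assembly} (hI : InvS a b α) {j : ℕ} (hj1 : 1 ≤ j)
    (hj2 : j ≤ a) {u : Placement} (hu : α ((j:ℤ)-1, 0) = some u) :
    facingGlue u ((j:ℤ)-1, 0) ((j:ℤ), 0) = some ((b:ℤ)+(j:ℤ), 1) := by
  have hPq := hI.prop _ u hu
  have heq : (((j:ℤ)), (0:ℤ)) = ((((j:ℤ)-1, (0:ℤ)).1)+1, (((j:ℤ)-1, (0:ℤ)).2)) := by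
    simp
  rw [heq, facingGlue_E]
  rcases hPq with ⟨hqq, hu1⟩ | ⟨j', hj1', hj2', hqq, hu1, hur⟩
    | ⟨j', hj1', hj2', hqq, hu1, hur⟩ | ⟨k, hk1, hk2, hq2, -, -, -⟩
    | ⟨k, hk1, hk2, hq2, -, -, -⟩
  · have hj : (j:ℤ) - 1 = 0 := by
      have := congrArg Prod.fst hqq; simpa using this
    rw [hu1, (H0_sides b u.2).2.2.1]
    have : (b:ℤ) + (j:ℤ) = (b:ℤ) + 1 := by omega
    rw [this]
  · have hj : (j:ℤ) - 1 = (j':ℤ) := by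
      have := congrArg Prod.fst hqq; simpa using this
    rw [hu1, (Ht_E_false a b j' u.2 hur).1, if_pos (by omega)]
    have : (b:ℤ) + (j:ℤ) = (b:ℤ) + (j':ℤ) + 1 := by omega
    rw [this]
  · exfalso
    have : (j:ℤ) - 1 = -(j':ℤ) := by
      have := congrArg Prod.fst hqq; simpa using this
    omega
  · exfalso; simp at hq2; omega
  · exfalso; simp at hq2; omega

lemma row_west_glue {a b : ℕ} {α : Assembly} (hI : InvS a b α) {j : ℕ} (hj1 : 1 ≤ j)
    (hj2 : j ≤ a) {u : Placement} (hu : α (-(j:ℤ)+1, 0) = some u) :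
    facingGlue u (-(j:ℤ)+1, 0) (-(j:ℤ), 0) = some ((b:ℤ)+(j:ℤ), 1) := by
  have hPq := hI.prop _ u hu
  have heq : ((-(j:ℤ)), (0:ℤ)) = (((-(j:ℤ)+1, (0:ℤ)).1)-1, ((-(j:ℤ)+1, (0:ℤ)).2)) := by
    simp
  rw [heq, facingGlue_W]
  rcases hPq with ⟨hqq, hu1⟩ | ⟨j', hj1', hj2', hqq, hu1, hur⟩
    | ⟨j', hj1', hj2', hqq, hu1, hur⟩ | ⟨k, hk1, hk2, hq2, -, -, -⟩
    | ⟨k, hk1, hk2, hq2, -, -, -⟩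
  · have hj : -(j:ℤ) + 1 = 0 := by
      have := congrArg Prod.fst hqq; simpa using this
    rw [hu1, (H0_sides b u.2).2.2.2]
    have : (b:ℤ) + (j:ℤ) = (b:ℤ) + 1 := by omega
    rw [this]
  · exfalso
    have : -(j:ℤ) + 1 = (j':ℤ) := by
      have := congrArg Prod.fst hqq; simpa using this
    omega
  · have hj : -(j:ℤ) + 1 = -(j':ℤ) := by
      have := congrArg Prod.fst hqq; simpa using this
    rw [hu1, (Ht_E_true a b j' u.2 hur).2, if_pos (by omega)]
    have : (b:ℤ) + (j:ℤ) = (b:ℤ) + (j':ℤ) + 1 := by omega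
    rw [this]
  · exfalso; simp at hq2; omega
  · exfalso; simp at hq2; omega

lemma col_up_glue {a b : ℕ} {α : Assembly} (hI : InvS a b α) {x : ℤ} {k : ℕ}
    (hk1 : 1 ≤ k) (hk2 : k ≤ b) {u : Placement} (hu : α (x, (k:ℤ)-1) = some u) :
    facingGlue u (x, (k:ℤ)-1) (x, (k:ℤ)) = some ((k:ℤ), 1) := by
  have hPq := hI.prop _ u hu
  have heq : ((x:ℤ), ((k:ℤ))) = (((x, (k:ℤ)-1).1), ((x, (k:ℤ)-1).2)+1) := by simp
  rw [heq, facingGlue_N]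
  rcases hPq with ⟨hqq, hu1⟩ | ⟨j', hj1', hj2', hqq, hu1, hur⟩
    | ⟨j', hj1', hj2', hqq, hu1, hur⟩ | ⟨k', hk1', hk2', hq2, -, hu1, hur⟩
    | ⟨k', hk1', hk2', hq2, -, hu1, hur⟩
  · have hk : (k:ℤ) - 1 = 0 := by
      have := congrArg Prod.snd hqq; simpa using this
    rw [hu1, (H0_sides b u.2).1]
    have : (k:ℤ) = 1 := by omega
    rw [this]
  · have hk : (k:ℤ) - 1 = 0 := by
      have := congrArg Prod.snd hqq; simpa using this
    rw [hu1, (Ht_NS a b j' u.2).1]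
    have : (k:ℤ) = 1 := by omega
    rw [this]
  · have hk : (k:ℤ) - 1 = 0 := by
      have := congrArg Prod.snd hqq; simpa using this
    rw [hu1, (Ht_NS a b j' u.2).1]
    have : (k:ℤ) = 1 := by omega
    rw [this]
  · have hk : (k:ℤ) - 1 = (k':ℤ) := by simpa using hq2
    rw [hu1, (Vt_NS_false b k' u.2 hur).1, if_pos (by omega)]
    have : (k:ℤ) = (k':ℤ) + 1 := by omega
    rw [this]
  · exfalso
    have : (k:ℤ) - 1 = -(k':ℤ) := by simpa using hq2
    omega

lemma col_down_glue {a b : ℕ} {α : Assembly} (hI : InvS a b α) {x : ℤ} {k : ℕ}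
    (hk1 : 1 ≤ k) (hk2 : k ≤ b) {u : Placement} (hu : α (x, -(k:ℤ)+1) = some u) :
    facingGlue u (x, -(k:ℤ)+1) (x, -(k:ℤ)) = some ((k:ℤ), 1) := by
  have hPq := hI.prop _ u hu
  have heq : ((x:ℤ), (-(k:ℤ))) = (((x, -(k:ℤ)+1).1), ((x, -(k:ℤ)+1).2)-1) := by simp
  rw [heq, facingGlue_S]
  rcases hPq with ⟨hqq, hu1⟩ | ⟨j', hj1', hj2', hqq, hu1, hur⟩
    | ⟨j', hj1', hj2', hqq, hu1, hur⟩ | ⟨k', hk1', hk2', hq2, -, hu1, hur⟩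
    | ⟨k', hk1', hk2', hq2, -, hu1, hur⟩
  · have hk : -(k:ℤ) + 1 = 0 := by
      have := congrArg Prod.snd hqq; simpa using this
    rw [hu1, (H0_sides b u.2).2.1]
    have : (k:ℤ) = 1 := by omega
    rw [this]
  · have hk : -(k:ℤ) + 1 = 0 := by
      have := congrArg Prod.snd hqq; simpa using this
    rw [hu1, (Ht_NS a b j' u.2).2]
    have : (k:ℤ) = 1 := by omega
    rw [this]
  · have hk : -(k:ℤ) + 1 = 0 := by
      have := congrArg Prod.snd hqq; simpa using this
    rw [hu1, (Ht_NS a b j' u.2).2]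
    have : (k:ℤ) = 1 := by omega
    rw [this]
  · exfalso
    have : -(k:ℤ) + 1 = (k':ℤ) := by simpa using hq2
    omega
  · have hk : -(k:ℤ) + 1 = -(k':ℤ) := by simpa using hq2
    rw [hu1, (Vt_NS_true b k' u.2 hur).2, if_pos (by omega)]
    have : (k:ℤ) = (k':ℤ) + 1 := by omega
    rw [this]

/-! ## Attachment at frontier positions -/

lemma attach_generic {a b : ℕ} {α : Assembly} (hI : InvS a b α) {p : ℤ × ℤ}
    (hp : α p = none) {t : TileType} (ht : t ∈ tilesAB a b) (r : Reflection) {q : ℤ × ℤ}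
    (hq : α q ≠ none)
    (hbond : BondAdj (Function.update α p (some (t, r))) p q) :
    Attaches (sysAB a b) α (Function.update α p (some (t, r))) := by
  refine ⟨p, t, r, hp, ht, rfl, ?_⟩
  set β := Function.update α p (some (t, r)) with hβ
  have hanch : ∀ x ∈ adom β, Relation.ReflTransGen (BondAdj β) ((0:ℤ),(0:ℤ)) x := by
    intro x hx
    by_cases hxp : x = p
    · subst hxp
      have hq' : q ∈ adom α := hq
      have hpath := hI.conn q hq'
      exact (Relation.ReflTransGen.mono (fun u v huv => bond_lift huv hp) _ _ hpath).tail
        (bondAdj_symm hbond)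
    · have hx' : x ∈ adom α := by
        simp only [adom, Set.mem_setOf_eq] at hx ⊢
        rwa [hβ, Function.update_of_ne hxp] at hx
      exact Relation.ReflTransGen.mono (fun u v huv => bond_lift huv hp) _ _ (hI.conn x hx')
  have hsym : ∀ x y, BondAdj β x y → BondAdj β y x := fun _ _ => bondAdj_symm
  show Stable β (sysAB a b).temp
  apply stable_of_conn
  intro x hx y hy
  haveI : Std.Symm (BondAdj β) := ⟨hsym⟩
  exact (Std.Symm.symm _ _ (hanch x hx)).trans (hanch y hy)

lemma glueBind_one (l : ℤ) : glueBind (some (l, 1)) (some (-l, 1)) = 1 := by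
  simp [glueBind]

lemma grow_row_pos {a b : ℕ} {α : Assembly} (hI : InvS a b α)
    (hterm : ∀ β, ¬ Attaches (sysAB a b) α β) {j : ℕ} (hj1 : 1 ≤ j) (hj2 : j ≤ a)
    (hprev : α ((j:ℤ)-1, 0) ≠ none) : α ((j:ℤ), 0) ≠ none := by
  intro hnone
  obtain ⟨u, hu⟩ := Option.ne_none_iff_exists'.1 hprev
  have hqp : ((j:ℤ)-1, (0:ℤ)) ≠ ((j:ℤ), 0) := by simp [Prod.ext_iff]
  have hbond : BondAdj (Function.update α ((j:ℤ), 0) (some (Ht a b j, (false, false))))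
      ((j:ℤ), 0) ((j:ℤ)-1, 0) := by
    unfold BondAdj bondStrength
    rw [Function.update_self, Function.update_of_ne hqp, hu]
    show 0 < glueBind _ _
    have h1 : facingGlue (Ht a b j, (false, false)) ((j:ℤ), 0) ((j:ℤ)-1, 0) =
        some (-((b:ℤ)+(j:ℤ)), 1) := by
      have heq : (((j:ℤ)-1), (0:ℤ)) = ((((j:ℤ), (0:ℤ)).1)-1, (((j:ℤ), (0:ℤ)).2)) := by simp
      rw [heq, facingGlue_W]
      exact (Ht_E_false a b j (false, false) rfl).2
    rw [h1, row_east_glue hI hj1 hj2 hu, glueBind_comm, glueBind_one]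
    omega
  exact hterm _ (attach_generic hI hnone (mem_tilesAB.2 (Or.inr (Or.inl ⟨j, hj1, hj2, rfl⟩)))
    (false, false) hprev hbond)

lemma grow_row_neg {a b : ℕ} {α : Assembly} (hI : InvS a b α)
    (hterm : ∀ β, ¬ Attaches (sysAB a b) α β) {j : ℕ} (hj1 : 1 ≤ j) (hj2 : j ≤ a)
    (hprev : α (-(j:ℤ)+1, 0) ≠ none) : α (-(j:ℤ), 0) ≠ none := by
  intro hnone
  obtain ⟨u, hu⟩ := Option.ne_none_iff_exists'.1 hprev
  have hqp : (-(j:ℤ)+1, (0:ℤ)) ≠ (-(j:ℤ), 0) := by simp [Prod.ext_iff]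
  have hbond : BondAdj (Function.update α (-(j:ℤ), 0) (some (Ht a b j, (true, false))))
      (-(j:ℤ), 0) (-(j:ℤ)+1, 0) := by
    unfold BondAdj bondStrength
    rw [Function.update_self, Function.update_of_ne hqp, hu]
    show 0 < glueBind _ _
    have h1 : facingGlue (Ht a b j, (true, false)) (-(j:ℤ), 0) (-(j:ℤ)+1, 0) =
        some (-((b:ℤ)+(j:ℤ)), 1) := by
      have heq : ((-(j:ℤ)+1), (0:ℤ)) = (((-(j:ℤ), (0:ℤ)).1)+1, ((-(j:ℤ), (0:ℤ)).2)) := by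
        simp
      rw [heq, facingGlue_E]
      exact (Ht_E_true a b j (true, false) rfl).1
    rw [h1, row_west_glue hI hj1 hj2 hu, glueBind_comm, glueBind_one]
    omega
  exact hterm _ (attach_generic hI hnone (mem_tilesAB.2 (Or.inr (Or.inl ⟨j, hj1, hj2, rfl⟩)))
    (true, false) hprev hbond)

lemma grow_col_up {a b : ℕ} {α : Assembly} (hI : InvS a b α)
    (hterm : ∀ β, ¬ Attaches (sysAB a b) α β) {x : ℤ} {k : ℕ} (hk1 : 1 ≤ k) (hk2 : k ≤ b)
    (hprev : α (x, (k:ℤ)-1) ≠ none) : α (x, (k:ℤ)) ≠ none := by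
  intro hnone
  obtain ⟨u, hu⟩ := Option.ne_none_iff_exists'.1 hprev
  have hqp : (x, (k:ℤ)-1) ≠ (x, (k:ℤ)) := by simp [Prod.ext_iff] <;> omega
  have hbond : BondAdj (Function.update α (x, (k:ℤ)) (some (Vt b k, (false, false))))
      (x, (k:ℤ)) (x, (k:ℤ)-1) := by
    unfold BondAdj bondStrength
    rw [Function.update_self, Function.update_of_ne hqp, hu]
    show 0 < glueBind _ _
    have h1 : facingGlue (Vt b k, (false, false)) (x, (k:ℤ)) (x, (k:ℤ)-1) =
        some (-(k:ℤ), 1) := by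
      have heq : ((x : ℤ), ((k:ℤ)-1)) = (((x, (k:ℤ)).1), ((x, (k:ℤ)).2)-1) := by simp
      rw [heq, facingGlue_S]
      exact (Vt_NS_false b k (false, false) rfl).2
    rw [h1, col_up_glue hI hk1 hk2 hu, glueBind_comm, glueBind_one]
    omega
  exact hterm _ (attach_generic hI hnone
    (mem_tilesAB.2 (Or.inr (Or.inr ⟨k, hk1, hk2, rfl⟩))) (false, false) hprev hbond)

lemma grow_col_down {a b : ℕ} {α : Assembly} (hI : InvS a b α)
    (hterm : ∀ β, ¬ Attaches (sysAB a b) α β) {x : ℤ} {k : ℕ} (hk1 : 1 ≤ k) (hk2 : k ≤ b)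
    (hprev : α (x, -(k:ℤ)+1) ≠ none) : α (x, -(k:ℤ)) ≠ none := by
  intro hnone
  obtain ⟨u, hu⟩ := Option.ne_none_iff_exists'.1 hprev
  have hqp : (x, -(k:ℤ)+1) ≠ (x, -(k:ℤ)) := by simp [Prod.ext_iff] <;> omega
  have hbond : BondAdj (Function.update α (x, -(k:ℤ)) (some (Vt b k, (false, true))))
      (x, -(k:ℤ)) (x, -(k:ℤ)+1) := by
    unfold BondAdj bondStrength
    rw [Function.update_self, Function.update_of_ne hqp, hu]
    show 0 < glueBind _ _
    have h1 : facingGlue (Vt b k, (false, true)) (x, -(k:ℤ)) (x, -(k:ℤ)+1) =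
        some (-(k:ℤ), 1) := by
      have heq : ((x : ℤ), (-(k:ℤ)+1)) = (((x, -(k:ℤ)).1), ((x, -(k:ℤ)).2)+1) := by simp
      rw [heq, facingGlue_N]
      exact (Vt_NS_true b k (false, true) rfl).1
    rw [h1, col_down_glue hI hk1 hk2 hu, glueBind_comm, glueBind_one]
    omega
  exact hterm _ (attach_generic hI hnone
    (mem_tilesAB.2 (Or.inr (Or.inr ⟨k, hk1, hk2, rfl⟩))) (false, true) hprev hbond)

/-! ## Terminal assemblies fill the rectangle -/

lemma terminal_full {a b : ℕ} {α : Assembly} (hI : InvS a b α)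
    (hterm : ∀ β, ¬ Attaches (sysAB a b) α β) :
    ∀ p : ℤ × ℤ, |p.1| ≤ (a:ℤ) → |p.2| ≤ (b:ℤ) → α p ≠ none := by
  have hrow : ∀ j : ℕ, j ≤ a → α ((j:ℤ), 0) ≠ none ∧ α (-(j:ℤ), 0) ≠ none := by
    intro j
    induction j with
    | zero => intro _; constructor <;> simpa using hI.orig
    | succ j ih =>
      intro hj
      have hprev := ih (by omega)
      constructor
      · have := grow_row_pos hI hterm (j := j+1) (by omega) hj
          (by push_cast; simpa using hprev.1)
        simpa using this
      · have := grow_row_neg hI hterm (j := j+1) (by omega) hj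
          (by push_cast; simpa using hprev.2)
        simpa using this
  have hrow' : ∀ x : ℤ, |x| ≤ (a:ℤ) → α (x, 0) ≠ none := by
    intro x hx
    have hx' := abs_le.1 hx
    rcases le_or_gt 0 x with h | h
    · have := (hrow x.toNat (by omega)).1
      rwa [Int.toNat_of_nonneg h] at this
    · have := (hrow (-x).toNat (by omega)).2
      rw [Int.toNat_of_nonneg (by omega)] at this
      simpa using this
  have hcol : ∀ x : ℤ, |x| ≤ (a:ℤ) → ∀ k : ℕ, k ≤ b →
      α (x, (k:ℤ)) ≠ none ∧ α (x, -(k:ℤ)) ≠ none := by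
    intro x hx k
    induction k with
    | zero => intro _; constructor <;> simpa using hrow' x hx
    | succ k ih =>
      intro hk
      have hprev := ih (by omega)
      constructor
      · have := grow_col_up hI hterm (x := x) (k := k+1) (by omega) hk
          (by push_cast; simpa using hprev.1)
        simpa using this
      · have := grow_col_down hI hterm (x := x) (k := k+1) (by omega) hk
          (by push_cast; simpa using hprev.2)
        simpa using this
  intro p hp1 hp2
  have hp2' := abs_le.1 hp2
  rcases le_or_gt 0 p.2 with h | h
  · have := (hcol p.1 hp1 p.2.toNat (by omega)).1
    rw [Int.toNat_of_nonneg h, Prod.mk.eta] at this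
    exact this
  · have := (hcol p.1 hp1 (-p.2).toNat (by omega)).2
    rw [Int.toNat_of_nonneg (by omega)] at this
    simp only [neg_neg] at this
    rw [Prod.mk.eta] at this
    exact this

lemma Pp_bounds {a b : ℕ} {p : ℤ × ℤ} {pl : Placement} (h : Pp a b p pl) :
    |p.1| ≤ (a:ℤ) ∧ |p.2| ≤ (b:ℤ) := by
  rcases h with ⟨hqq, -⟩ | ⟨j, hj1, hj2, hqq, -, -⟩ | ⟨j, hj1, hj2, hqq, -, -⟩
    | ⟨k, hk1, hk2, hq2, hq1, -, -⟩ | ⟨k, hk1, hk2, hq2, hq1, -, -⟩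
  · rw [hqq]; simp
  · rw [hqq]; simp [abs_le]; omega
  · rw [hqq]; simp [abs_le]; omega
  · exact ⟨hq1, by rw [abs_le]; omega⟩
  · exact ⟨hq1, by rw [abs_le]; omega⟩

/-- For all odd `n, m ∈ ℤ⁺`, some singly seeded temperature-1 RTAM system
with exactly `(n + m)/2` tile types strictly self-assembles an `n × m` rectangle. -/
theorem rtam_odd_rectangle
    (n m : ℕ) (hn : Odd n) (hm : Odd m) :
    ∃ Sys : RTAS, Sys.temp = 1 ∧ Sys.tiles.card = (n + m) / 2 ∧ SinglySeeded Sys ∧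
      StrictlySelfAssembles Sys (rectShape n m) := by
  obtain ⟨a, ha⟩ := hn
  obtain ⟨b, hb⟩ := hm
  refine ⟨sysAB a b, rfl, ?_, ⟨((0:ℤ),(0:ℤ)), adom_seedA b⟩, ?_⟩
  · show (tilesAB a b).card = (n + m) / 2
    rw [card_tilesAB]; omega
  · intro α hterm
    obtain ⟨hprod, hnat⟩ := hterm
    have hI := producible_inv hprod
    have hfull := terminal_full hI (fun β h => hnat β h)
    refine ⟨(false, false), ((a:ℤ), (b:ℤ)), ?_⟩
    ext p
    have hpt : Reflection.onPoint (false, false) (p - ((a:ℤ), (b:ℤ)))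
        = (p.1 - (a:ℤ), p.2 - (b:ℤ)) := by
      simp [Reflection.onPoint, Prod.ext_iff]
    simp only [adom, Set.mem_setOf_eq, transform, hpt, ne_eq, Option.map_eq_none_iff]
    constructor
    · intro hne
      obtain ⟨pl, hpl⟩ := Option.ne_none_iff_exists'.1 hne
      obtain ⟨h1, h2⟩ := Pp_bounds (hI.prop _ pl hpl)
      simp only [abs_le] at h1 h2
      simp only [rectShape, Set.mem_setOf_eq]
      constructor
      · simp at h1; omega
      constructor
      · simp at h1; omega
      constructor
      · simp at h2; omega
      · simp at h2; omega
    · intro hrect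
      simp only [rectShape, Set.mem_setOf_eq] at hrect
      exact hfull (p.1 - (a:ℤ), p.2 - (b:ℤ)) (by rw [abs_le]; simp; omega)
        (by rw [abs_le]; simp; omega)
end
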